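/- arXiv:2305.00777 — 14 statements merged into one kernel-verified Lean document; each statement's English description precedes it below -/
import Mathlib

section
/- A belief system ((μ_s, τ_s))_{s∈S} is Bayes-plausible (i.e., ∑_{s∈S} τ_s μ_s = μ0) if and only if there exists a sender strategy π that induces it, i.e., τ_s = ∑_{ω∈Ω} μ0(ω) π(s|ω) for every s ∈ S, and μ_s(ω) = μ0(ω) π(s|ω)/τ_s for every s with τ_s > 0 and every ω ∈ Ω. -/
open scoped BigOperators

/-- A belief system `((μ s, τ s))_{s ∈ S}` is Bayes-plausible
(`∑ s, τ s • μ s = μ0`) iff it is induced by some sender strategy `π`. -/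
theorem bayes_plausible_iff_induced_by_strategy
    {Ω S : Type*} [Fintype Ω] [Nonempty Ω] [Fintype S] [Nonempty S]
    (μ0 : Ω → ℝ) (hμ0 : μ0 ∈ stdSimplex ℝ Ω) (hfull : ∀ ω, 0 < μ0 ω)
    (μ : S → Ω → ℝ) (hμ : ∀ s, μ s ∈ stdSimplex ℝ Ω)
    (τ : S → ℝ) (hτ : ∀ s, 0 ≤ τ s) (hτ1 : ∑ s, τ s = 1) :
    (∀ ω, ∑ s, τ s * μ s ω = μ0 ω) ↔
      ∃ π : Ω → S → ℝ, (∀ ω, π ω ∈ stdSimplex ℝ S) ∧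
        (∀ s, τ s = ∑ ω, μ0 ω * π ω s) ∧
        (∀ s, 0 < τ s → ∀ ω, μ s ω = μ0 ω * π ω s / τ s) := by
  constructor
  · intro h
    refine ⟨fun ω s => τ s * μ s ω / μ0 ω, ?_, ?_, ?_⟩
    · intro ω
      constructor
      · intro s
        exact div_nonneg (mul_nonneg (hτ s) ((hμ s).1 ω)) (hfull ω).le
      · rw [← Finset.sum_div, h ω, div_self (hfull ω).ne']
    · intro s
      have : ∀ ω, μ0 ω * (τ s * μ s ω / μ0 ω) = τ s * μ s ω := by
        intro ω; rw [mul_div_cancel₀ _ (hfull ω).ne']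
      simp_rw [this, ← Finset.mul_sum, (hμ s).2, mul_one]
    · intro s hs ω
      field_simp [hs.ne', (hfull ω).ne']
  · rintro ⟨π, hπ, hπτ, hπμ⟩ ω
    have key : ∀ s, τ s * μ s ω = μ0 ω * π ω s := by
      intro s
      rcases (hτ s).lt_or_eq with hs | hs
      · rw [hπμ s hs ω]; field_simp
      · have h0 : ∀ ω', μ0 ω' * π ω' s = 0 := by
          have := (hπτ s).symm
          rw [← hs] at this
          intro ω'
          have hnn : ∀ x ∈ Finset.univ, 0 ≤ μ0 x * π x s := fun x _ =>
            mul_nonneg (hfull x).le ((hπ x).1 s)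
          exact (Finset.sum_eq_zero_iff_of_nonneg hnn).mp this ω' (Finset.mem_univ _)
        rw [← hs, zero_mul, h0 ω]
    rw [Finset.sum_congr rfl (fun s _ => key s), ← Finset.mul_sum, (hπ ω).2, mul_one]
end

section
/- For any function v̂ : Δ(Ω) × S → ℝ and any prior μ0 ∈ Δ(Ω): (i) a payoff z ∈ ℝ is attainable in signaling with commitment at μ0 if and only if (μ0, z) ∈ join((v̂_s)_{s∈S}); (ii) if (μ0, z) = ∑_{s∈S} λ_s (μ_s, v̂(μ_s, s)) with λ_s ≥ 0, ∑_{s∈S} λ_s = 1 and μ_s ∈ Δ(Ω), then the belief system ((μ_s, τ_s = λ_s))_{s∈S} is Bayes-plausible and attains z; (iii) consequently the supremum of attainable payoffs at μ0 equals sup{z : (μ0, z) ∈ join((v̂_s)_{s∈S})}. -/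
open scoped BigOperators

noncomputable section

/-- The (topological) join of a finite family of subsets of a real vector space:
all convex combinations using at most one point from each set. -/
def joinFam {E : Type*} [AddCommMonoid E] [Module ℝ E] {ι : Type*} [Fintype ι]
    (X : ι → Set E) : Set E :=
  {p | ∃ (lam : ι → ℝ) (x : ι → E), (∀ i, 0 ≤ lam i) ∧ (∑ i, lam i) = 1 ∧
    (∀ i, x i ∈ X i) ∧ p = ∑ i, lam i • x i}

/-- The interim payoff graph of action `s`: `{(μ, v̂(μ, s)) : μ ∈ Δ(Ω)}`. -/
def payoffGraph {Ω S : Type*} [Fintype Ω] (vhat : (Ω → ℝ) → S → ℝ) (s : S) :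
    Set ((Ω → ℝ) × ℝ) :=
  {q | ∃ μ ∈ stdSimplex ℝ Ω, q = (μ, vhat μ s)}

/-- A payoff `z` is attainable in signaling with commitment at prior `μ0`:
there is a Bayes-plausible belief system whose expected payoff is `z`. -/
def AttainableWithCommitment {Ω S : Type*} [Fintype Ω] [Fintype S]
    (vhat : (Ω → ℝ) → S → ℝ) (μ0 : Ω → ℝ) (z : ℝ) : Prop :=
  ∃ (μ : S → Ω → ℝ) (τ : S → ℝ),
    (∀ s, μ s ∈ stdSimplex ℝ Ω) ∧ (∀ s, 0 ≤ τ s) ∧ (∑ s, τ s) = 1 ∧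
    (∀ ω, ∑ s, τ s * μ s ω = μ0 ω) ∧ (∑ s, τ s * vhat (μ s) s) = z

/-- (i) `z` is attainable in signaling with commitment at `μ0`
iff `(μ0, z)` lies in the join of the interim payoff graphs; (ii) any convex
combination representation of `(μ0, z)` yields a Bayes-plausible belief system
attaining `z`; (iii) the supremum of attainable payoffs equals
`sup {z : (μ0, z) ∈ join}`. -/
theorem signaling_with_commitment
    {Ω S : Type*} [Fintype Ω] [Nonempty Ω] [Fintype S] [Nonempty S]
    (vhat : (Ω → ℝ) → S → ℝ)
    (μ0 : Ω → ℝ) (hμ0 : μ0 ∈ stdSimplex ℝ Ω) (hfull : ∀ ω, 0 < μ0 ω) :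
    (∀ z : ℝ, AttainableWithCommitment vhat μ0 z ↔
        ((μ0, z) : (Ω → ℝ) × ℝ) ∈ joinFam (payoffGraph vhat)) ∧
    (∀ (z : ℝ) (lam : S → ℝ) (μ : S → Ω → ℝ),
      (∀ s, 0 ≤ lam s) → (∑ s, lam s) = 1 → (∀ s, μ s ∈ stdSimplex ℝ Ω) →
      ((μ0, z) : (Ω → ℝ) × ℝ) = ∑ s, lam s • ((μ s, vhat (μ s) s) : (Ω → ℝ) × ℝ) →
      ((∀ ω, ∑ s, lam s * μ s ω = μ0 ω) ∧ (∑ s, lam s * vhat (μ s) s) = z)) ∧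
    sSup {z : ℝ | AttainableWithCommitment vhat μ0 z} =
      sSup {z : ℝ | ((μ0, z) : (Ω → ℝ) × ℝ) ∈ joinFam (payoffGraph vhat)} := by
  
  have key : ∀ (z : ℝ) (lam : S → ℝ) (μ : S → Ω → ℝ),
      (∀ s, 0 ≤ lam s) → (∑ s, lam s) = 1 → (∀ s, μ s ∈ stdSimplex ℝ Ω) →
      ((μ0, z) : (Ω → ℝ) × ℝ) = ∑ s, lam s • ((μ s, vhat (μ s) s) : (Ω → ℝ) × ℝ) →
      ((∀ ω, ∑ s, lam s * μ s ω = μ0 ω) ∧ (∑ s, lam s * vhat (μ s) s) = z) := by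
    intro z lam μ hlam hsum hμ hrep
    have h1 : μ0 = ∑ s, lam s • μ s := by
      have := congrArg Prod.fst hrep
      simpa [Prod.fst_sum] using this
    have h2 : z = ∑ s, lam s * vhat (μ s) s := by
      have := congrArg Prod.snd hrep
      simpa [Prod.snd_sum] using this
    refine ⟨fun ω => ?_, h2.symm⟩
    have := congrFun h1 ω
    simpa [Finset.sum_apply] using this.symm
  have iff1 : ∀ z : ℝ, AttainableWithCommitment vhat μ0 z ↔
      ((μ0, z) : (Ω → ℝ) × ℝ) ∈ joinFam (payoffGraph vhat) := by
    intro z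
    constructor
    · rintro ⟨μ, τ, hμ, hτ, hτ1, hbayes, hz⟩
      refine ⟨τ, fun s => (μ s, vhat (μ s) s), hτ, hτ1,
        fun s => ⟨μ s, hμ s, rfl⟩, ?_⟩
      ext1
      · simp only [Prod.fst_sum]
        funext ω
        simpa [Finset.sum_apply] using (hbayes ω).symm
      · simpa [Prod.snd_sum] using hz.symm
    · rintro ⟨lam, x, hlam, hsum, hx, hrep⟩
      choose μ hμ hxeq using hx
      have hrep' : ((μ0, z) : (Ω → ℝ) × ℝ)
          = ∑ s, lam s • ((μ s, vhat (μ s) s) : (Ω → ℝ) × ℝ) := by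
        rw [hrep]
        exact Finset.sum_congr rfl fun s _ => by rw [hxeq s]
      obtain ⟨hb, hz⟩ := key z lam μ hlam hsum hμ hrep'
      exact ⟨μ, lam, hμ, hlam, hsum, hb, hz⟩
  refine ⟨iff1, key, ?_⟩
  congr 1
  ext z
  exact iff1 z
end
end

section
/- A finitely supported probability distribution τ on Δ(Ω) × S is induced by some extended sender strategy over some nonempty finite message set M if and only if its belief marginal τ_m(μ) = ∑_{s∈S} τ(μ, s) is Bayes-plausible, i.e., ∑_μ τ_m(μ) μ = μ0. -/
open scoped BigOperators Classical

noncomputable section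

/-- The extended sender strategy `π` (over message set `M`) induces the joint
distribution `τ` on `Δ(Ω) × S`: `τ(μ, s)` is the total probability of message/action
pairs `(m, s)` with positive probability whose posterior is `μ`. -/
def InducesJoint {Ω S M : Type*} [Fintype Ω] [Fintype S] [Fintype M]
    (μ0 : Ω → ℝ) (π : Ω → M × S → ℝ) (τ : ((Ω → ℝ) × S) → ℝ) : Prop :=
  ∀ (μ : Ω → ℝ) (s : S),
    τ (μ, s) =
      ∑ m ∈ Finset.univ.filter (fun m : M =>
          0 < (∑ ω, μ0 ω * π ω (m, s)) ∧
          (fun ω => μ0 ω * π ω (m, s) / ∑ ω', μ0 ω' * π ω' (m, s)) = μ),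
        ∑ ω, μ0 ω * π ω (m, s)

theorem aux_fwd
    {Ω S : Type*} [Fintype Ω] [Nonempty Ω] [Fintype S] [Nonempty S]
    (μ0 : Ω → ℝ) (hμ0 : μ0 ∈ stdSimplex ℝ Ω) (hfull : ∀ ω, 0 < μ0 ω)
    (τ : ((Ω → ℝ) × S) → ℝ)
    (hτ0 : ∀ x, 0 ≤ τ x) (hτfin : (Function.support τ).Finite)
    (hτ1 : ∑ᶠ x, τ x = 1)
    (hτΔ : ∀ x, τ x ≠ 0 → x.1 ∈ stdSimplex ℝ Ω)
    {M : Type} [Fintype M] [Nonempty M] (π : Ω → M × S → ℝ)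
    (hπ : ∀ ω, π ω ∈ stdSimplex ℝ (M × S)) (hind : InducesJoint μ0 π τ) :
    ∀ ω, ∑ᶠ x : (Ω → ℝ) × S, τ x * x.1 ω = μ0 ω := by
  intro ω
  classical
  set T : Finset ((Ω → ℝ) × S) := hτfin.toFinset with hT
  set p : M → S → ℝ := fun m s => ∑ ω, μ0 ω * π ω (m, s) with hpdef
  set post : M → S → Ω → ℝ := fun m s ω => μ0 ω * π ω (m, s) / p m s with hpostdef
  have hterm0 : ∀ (m : M) (s : S) (ω' : Ω), 0 ≤ μ0 ω' * π ω' (m, s) :=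
    fun m s ω' => mul_nonneg (hfull ω').le ((hπ ω').1 (m, s))
  have hp0 : ∀ m s, 0 ≤ p m s := fun m s =>
    Finset.sum_nonneg fun ω' _ => hterm0 m s ω'
  -- each x ∈ T term rewritten
  have key : ∀ x ∈ T, τ x * x.1 ω =
      ∑ m ∈ Finset.univ.filter (fun m : M => 0 < p m x.2 ∧ post m x.2 = x.1),
        μ0 ω * π ω (m, x.2) := by
    rintro ⟨μ, s⟩ hx
    have := hind μ s
    simp only at this ⊢
    rw [this, Finset.sum_mul]
    refine Finset.sum_congr rfl ?_
    intro m hm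
    rw [Finset.mem_filter] at hm
    obtain ⟨-, hpos, hpost⟩ := hm
    have : μ ω = μ0 ω * π ω (m, s) / p m s := by rw [← hpost]
    rw [this, mul_comm, div_mul_cancel₀ _ (ne_of_gt hpos)]
  -- RHS manipulation
  have hsupp : Function.support (fun x : (Ω → ℝ) × S => τ x * x.1 ω) ⊆ (T : Set _) := by
    intro x hx
    have : τ x ≠ 0 := fun h => hx (by simp [h])
    simpa [hT] using this
  rw [finsum_eq_finset_sum_of_support_subset _ hsupp]
  rw [Finset.sum_congr rfl key]
  -- now show ∑ x ∈ T, ∑ m ∈ F x, ... = μ0 ω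
  have hπsum : ∑ ms : M × S, π ω ms = 1 := (hπ ω).2
  have RHS : ∑ s : S, ∑ m : M, μ0 ω * π ω (m, s) = μ0 ω := by
    rw [Finset.sum_comm, ← Fintype.sum_prod_type (fun ms : M × S => μ0 ω * π ω ms), ← Finset.mul_sum, hπsum, mul_one]
  refine Eq.trans ?_ RHS
  rw [← Finset.sum_fiberwise T Prod.snd
    (fun x => ∑ m ∈ Finset.univ.filter (fun m : M => 0 < p m x.2 ∧ post m x.2 = x.1),
        μ0 ω * π ω (m, x.2))]
  refine Finset.sum_congr rfl ?_
  intro s _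
  -- fixed s
  set Bs : Finset (Ω → ℝ) := (T.filter (fun x => x.2 = s)).image Prod.fst with hBs
  have hinj : ∀ x ∈ T.filter (fun x => x.2 = s), ∀ y ∈ T.filter (fun x => x.2 = s),
      x.1 = y.1 → x = y := by
    rintro ⟨a, sa⟩ ha ⟨b, sb⟩ hb h
    rw [Finset.mem_filter] at ha hb
    simp only at ha hb h
    simp [h, ha.2, hb.2]
  have step1 : ∑ x ∈ T.filter (fun x => x.2 = s),
      (∑ m ∈ Finset.univ.filter (fun m : M => 0 < p m x.2 ∧ post m x.2 = x.1),
        μ0 ω * π ω (m, x.2))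
      = ∑ μ ∈ Bs, ∑ m ∈ Finset.univ.filter (fun m : M => 0 < p m s ∧ post m s = μ),
          μ0 ω * π ω (m, s) := by
    rw [hBs, Finset.sum_image hinj]
    refine Finset.sum_congr rfl ?_
    rintro ⟨a, sa⟩ ha
    rw [Finset.mem_filter] at ha
    simp only at ha ⊢
    rw [ha.2]
  rw [step1]
  -- now show ∑ μ ∈ Bs, ... = ∑ m, μ0 ω π ω (m,s)
  have hA : ∑ m ∈ Finset.univ.filter (fun m : M => 0 < p m s), μ0 ω * π ω (m, s)
      = ∑ m : M, μ0 ω * π ω (m, s) := by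
    refine Finset.sum_filter_of_ne ?_
    intro m _ hne
    have h1 : 0 < μ0 ω * π ω (m, s) := lt_of_le_of_ne (hterm0 m s ω) (Ne.symm hne)
    exact lt_of_lt_of_le h1 (Finset.single_le_sum (fun ω' _ => hterm0 m s ω') (Finset.mem_univ ω))
  have hmaps : ∀ m ∈ Finset.univ.filter (fun m : M => 0 < p m s), post m s ∈ Bs := by
    intro m hm
    rw [Finset.mem_filter] at hm
    have hmem : m ∈ Finset.univ.filter
        (fun m' : M => 0 < p m' s ∧ post m' s = post m s) := by
      rw [Finset.mem_filter]; exact ⟨Finset.mem_univ m, hm.2, rfl⟩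
    have hτpos : 0 < τ (post m s, s) := by
      have := hind (post m s) s
      have hle : p m s ≤ ∑ m' ∈ Finset.univ.filter
          (fun m' : M => 0 < p m' s ∧
            (fun ω => μ0 ω * π ω (m', s) / ∑ ω', μ0 ω' * π ω' (m', s)) = post m s),
          p m' s := by
        refine Finset.single_le_sum (fun m' _ => hp0 m' s) ?_
        rw [Finset.mem_filter]
        exact ⟨Finset.mem_univ m, hm.2, rfl⟩
      calc (0:ℝ) < p m s := hm.2
        _ ≤ _ := hle
        _ = τ (post m s, s) := (hind (post m s) s).symm
    rw [hBs, Finset.mem_image]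
    refine ⟨(post m s, s), ?_, rfl⟩
    rw [Finset.mem_filter]
    constructor
    · rw [hT, Set.Finite.mem_toFinset]; exact ne_of_gt hτpos
    · rfl
  have step2 : ∑ μ ∈ Bs, ∑ m ∈ Finset.univ.filter (fun m : M => 0 < p m s ∧ post m s = μ),
      μ0 ω * π ω (m, s) = ∑ m ∈ Finset.univ.filter (fun m : M => 0 < p m s),
        μ0 ω * π ω (m, s) := by
    rw [← Finset.sum_fiberwise_of_maps_to hmaps (fun m => μ0 ω * π ω (m, s))]
    refine Finset.sum_congr rfl ?_
    intro μ _
    congr 1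
    ext m
    simp only [Finset.mem_filter, Finset.mem_univ, true_and]
  rw [step2, hA]

theorem aux_bwd
    {Ω S : Type*} [Fintype Ω] [Nonempty Ω] [Fintype S] [Nonempty S]
    (μ0 : Ω → ℝ) (hμ0 : μ0 ∈ stdSimplex ℝ Ω) (hfull : ∀ ω, 0 < μ0 ω)
    (τ : ((Ω → ℝ) × S) → ℝ)
    (hτ0 : ∀ x, 0 ≤ τ x) (hτfin : (Function.support τ).Finite)
    (hτ1 : ∑ᶠ x, τ x = 1)
    (hτΔ : ∀ x, τ x ≠ 0 → x.1 ∈ stdSimplex ℝ Ω)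
    (hb : ∀ ω, ∑ᶠ x : (Ω → ℝ) × S, τ x * x.1 ω = μ0 ω) :
    ∃ (M : Type) (_ : Fintype M) (_ : Nonempty M) (π : Ω → M × S → ℝ),
        (∀ ω, π ω ∈ stdSimplex ℝ (M × S)) ∧ InducesJoint μ0 π τ := by
  classical
  set T : Finset ((Ω → ℝ) × S) := hτfin.toFinset with hT
  have hmemT : ∀ x, x ∈ T ↔ τ x ≠ 0 := fun x => hτfin.mem_toFinset
  have hTne : T.Nonempty := by
    by_contra h
    rw [Finset.not_nonempty_iff_eq_empty] at h
    have hz : ∀ x, τ x = 0 := by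
      intro x
      by_contra hx
      have : x ∈ T := (hmemT x).mpr hx
      simp [h] at this
    rw [show τ = fun _ => 0 from funext hz] at hτ1
    simp at hτ1
  haveI : Nonempty {x // x ∈ T} := hTne.to_subtype
  set M : Type := Fin (Fintype.card {x // x ∈ T}) with hM
  have e : M ≃ {x // x ∈ T} := (Fintype.equivFin _).symm
  haveI hMne : Nonempty M := Nonempty.map e.symm inferInstance
  set key : M → (Ω → ℝ) × S := fun i => (e i).1 with hkey
  have hkeyT : ∀ i, key i ∈ T := fun i => (e i).2
  have hkeyτ : ∀ i, 0 < τ (key i) :=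
    fun i => lt_of_le_of_ne (hτ0 _) (Ne.symm ((hmemT _).mp (hkeyT i)))
  have hkeyΔ : ∀ i, (key i).1 ∈ stdSimplex ℝ Ω :=
    fun i => hτΔ _ ((hmemT _).mp (hkeyT i))
  have hkeyinj : Function.Injective key :=
    fun i j h => e.injective (Subtype.ext h)
  set π : Ω → M × S → ℝ := fun ω ms =>
    if (key ms.1).2 = ms.2 then τ (key ms.1) * (key ms.1).1 ω / μ0 ω else 0 with hπdef
  -- the sender marginal sums to μ0 ω
  have hmarg : ∀ ω, ∑ i : M, τ (key i) * (key i).1 ω = μ0 ω := by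
    intro ω
    have h1 : ∑ i : M, τ (key i) * (key i).1 ω
        = ∑ x : {x // x ∈ T}, τ x.1 * x.1.1 ω :=
      Equiv.sum_comp e (fun x : {x // x ∈ T} => τ x.1 * x.1.1 ω)
    rw [h1, Finset.sum_coe_sort T (fun x => τ x * x.1 ω)]
    rw [← finsum_eq_finset_sum_of_support_subset _ ?_, hb ω]
    intro x hx
    have : τ x ≠ 0 := fun h => hx (by simp [h])
    simpa [hT] using this
  have hπsimplex : ∀ ω, π ω ∈ stdSimplex ℝ (M × S) := by
    intro ω
    constructor
    · rintro ⟨i, s⟩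
      simp only [hπdef]
      split
      · exact div_nonneg (mul_nonneg (hτ0 _) ((hkeyΔ i).1 ω)) (hfull ω).le
      · exact le_refl 0
    · rw [Fintype.sum_prod_type]
      have h2 : ∀ i : M, ∑ s : S, π ω (i, s) = τ (key i) * (key i).1 ω / μ0 ω := by
        intro i
        simp only [hπdef]
        simp
      rw [Finset.sum_congr rfl (fun i _ => h2 i), ← Finset.sum_div, hmarg ω,
        div_self (ne_of_gt (hfull ω))]
  refine ⟨M, inferInstance, hMne, π, hπsimplex, ?_⟩
  intro μ s
  -- value of p
  have hpval : ∀ i : M, (∑ ω, μ0 ω * π ω (i, s))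
      = if (key i).2 = s then τ (key i) else 0 := by
    intro i
    by_cases h : (key i).2 = s
    · rw [if_pos h]
      have : ∀ ω, μ0 ω * π ω (i, s) = τ (key i) * (key i).1 ω := by
        intro ω
        simp only [hπdef, if_pos h]
        rw [mul_comm (μ0 ω), div_mul_cancel₀ _ (ne_of_gt (hfull ω))]
      rw [Finset.sum_congr rfl (fun ω _ => this ω), ← Finset.mul_sum,
        (hkeyΔ i).2, mul_one]
    · rw [if_neg h]
      refine Finset.sum_eq_zero fun ω _ => ?_
      simp [hπdef, h]
  have hpost : ∀ i : M, (key i).2 = s →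
      (fun ω => μ0 ω * π ω (i, s) / ∑ ω', μ0 ω' * π ω' (i, s)) = (key i).1 := by
    intro i h
    funext ω
    have hnum : μ0 ω * π ω (i, s) = τ (key i) * (key i).1 ω := by
      simp only [hπdef, if_pos h]
      rw [mul_comm (μ0 ω), div_mul_cancel₀ _ (ne_of_gt (hfull ω))]
    rw [hnum, hpval i, if_pos h, mul_comm, mul_div_assoc,
      div_self (ne_of_gt (hkeyτ i)), mul_one]
  have hF : Finset.univ.filter (fun i : M =>
        0 < (∑ ω, μ0 ω * π ω (i, s)) ∧
        (fun ω => μ0 ω * π ω (i, s) / ∑ ω', μ0 ω' * π ω' (i, s)) = μ)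
      = Finset.univ.filter (fun i : M => key i = (μ, s)) := by
    ext i
    simp only [Finset.mem_filter, Finset.mem_univ, true_and]
    constructor
    · rintro ⟨hpos, hμ⟩
      have h2 : (key i).2 = s := by
        by_contra hc
        rw [hpval i, if_neg hc] at hpos
        exact lt_irrefl 0 hpos
      have h1 : (key i).1 = μ := by rw [← hpost i h2, hμ]
      exact Prod.ext h1 h2
    · intro h
      have h2 : (key i).2 = s := by rw [h]
      have h1 : (key i).1 = μ := by rw [h]
      refine ⟨?_, by rw [hpost i h2, h1]⟩
      rw [hpval i, if_pos h2]
      exact hkeyτ i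
  rw [hF]
  by_cases hμs : τ (μ, s) = 0
  · rw [hμs]
    rw [Finset.sum_eq_zero]
    intro i hi
    rw [Finset.mem_filter] at hi
    exact absurd (hi.2 ▸ hμs) (ne_of_gt (hkeyτ i))
  · have hmem : (μ, s) ∈ T := (hmemT _).mpr hμs
    set i0 : M := e.symm ⟨(μ, s), hmem⟩ with hi0
    have hki0 : key i0 = (μ, s) := by
      simp only [hkey, hi0, Equiv.apply_symm_apply]
    have hsingle : Finset.univ.filter (fun i : M => key i = (μ, s)) = {i0} := by
      ext i
      simp only [Finset.mem_filter, Finset.mem_univ, true_and, Finset.mem_singleton]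
      constructor
      · intro h; exact hkeyinj (h.trans hki0.symm)
      · intro h; rw [h, hki0]
    rw [hsingle, Finset.sum_singleton, hpval i0, if_pos (by rw [hki0]), hki0]

/-- A finitely supported probability distribution `τ` on
`Δ(Ω) × S` is induced by some extended sender strategy over some nonempty finite
message set `M` iff its belief marginal is Bayes-plausible. -/
theorem inducible_joint_distribution_iff_bayes_plausible
    {Ω S : Type*} [Fintype Ω] [Nonempty Ω] [Fintype S] [Nonempty S]
    (μ0 : Ω → ℝ) (hμ0 : μ0 ∈ stdSimplex ℝ Ω) (hfull : ∀ ω, 0 < μ0 ω)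
    (τ : ((Ω → ℝ) × S) → ℝ)
    (hτ0 : ∀ x, 0 ≤ τ x) (hτfin : (Function.support τ).Finite)
    (hτ1 : ∑ᶠ x, τ x = 1)
    (hτΔ : ∀ x, τ x ≠ 0 → x.1 ∈ stdSimplex ℝ Ω) :
    (∃ (M : Type) (_ : Fintype M) (_ : Nonempty M) (π : Ω → M × S → ℝ),
        (∀ ω, π ω ∈ stdSimplex ℝ (M × S)) ∧ InducesJoint μ0 π τ) ↔
      (∀ ω, ∑ᶠ x : (Ω → ℝ) × S, τ x * x.1 ω = μ0 ω) := by
  constructor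
  · rintro ⟨M, hMf, hMne, π, hπ, hind⟩
    exact aux_fwd μ0 hμ0 hfull τ hτ0 hτfin hτ1 hτΔ π hπ hind
  · exact aux_bwd μ0 hμ0 hfull τ hτ0 hτfin hτ1 hτΔ
end
end

section
/- If a finitely supported probability distribution τ on Δ(Ω) × S is induced by some extended sender strategy, then it is also induced by an extended sender strategy π' over some nonempty finite message set M with the property that, conditional on the message, the action conveys no additional information about the state: for every m ∈ M and s ∈ S with p'(m, s) > 0, the posterior given (m, s) equals the posterior given m alone, i.e., μ'_{(m,s)}(ω) = μ0(ω) ∑_{s'} π'(m, s'|ω) / ∑_{s',ω'} μ0(ω') π'(m, s'|ω') for all ω ∈ Ω. -/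
open scoped BigOperators Classical

noncomputable section

/-- If a finitely supported joint distribution `τ` on `Δ(Ω) × S`
is induced by some extended sender strategy, then it is also induced by an extended
strategy `π'` such that, conditional on the message, the action conveys no additional
information about the state: the posterior given `(m, s)` equals the posterior given
`m` alone. -/
theorem inducible_with_uninformative_actions
    {Ω S : Type*} [Fintype Ω] [Nonempty Ω] [Fintype S] [Nonempty S]
    (μ0 : Ω → ℝ) (hμ0 : μ0 ∈ stdSimplex ℝ Ω) (hfull : ∀ ω, 0 < μ0 ω)
    (τ : ((Ω → ℝ) × S) → ℝ)
    (hτ0 : ∀ x, 0 ≤ τ x) (hτfin : (Function.support τ).Finite)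
    (hτ1 : ∑ᶠ x, τ x = 1)
    (hτΔ : ∀ x, τ x ≠ 0 → x.1 ∈ stdSimplex ℝ Ω)
    (hind : ∃ (M : Type) (_ : Fintype M) (_ : Nonempty M) (π : Ω → M × S → ℝ),
        (∀ ω, π ω ∈ stdSimplex ℝ (M × S)) ∧ InducesJoint μ0 π τ) :
    ∃ (M : Type) (_ : Fintype M) (_ : Nonempty M) (π' : Ω → M × S → ℝ),
      (∀ ω, π' ω ∈ stdSimplex ℝ (M × S)) ∧ InducesJoint μ0 π' τ ∧
      ∀ (m : M) (s : S), 0 < (∑ ω, μ0 ω * π' ω (m, s)) →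
        ∀ ω, μ0 ω * π' ω (m, s) / (∑ ω', μ0 ω' * π' ω' (m, s)) =
          μ0 ω * (∑ s', π' ω (m, s')) /
            (∑ ω', μ0 ω' * (∑ s', π' ω' (m, s'))) := by
  obtain ⟨M, hM, hMne, π, hπΔ, hπind⟩ := hind
  set e : S ≃ Fin (Fintype.card S) := Fintype.equivFin S with he
  refine ⟨M × Fin (Fintype.card S), inferInstance, inferInstance,
    fun ω q => if q.2 = e.symm q.1.2 then π ω (q.1.1, q.2) else 0, ?_, ?_, ?_⟩
  · intro ω
    constructor
    · intro q
      dsimp only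
      split_ifs with h
      · exact (hπΔ ω).1 _
      · exact le_refl 0
    · have h1 := (hπΔ ω).2
      rw [Fintype.sum_prod_type]
      simp only [Finset.sum_ite_eq' Finset.univ]
      simp only [Finset.mem_univ, if_true]
      rw [← h1]
      exact Fintype.sum_equiv ((Equiv.refl M).prodCongr e.symm) _ _ (by
        intro x; rfl)
  · intro μ s
    rw [hπind μ s, Finset.sum_filter, Finset.sum_filter, Fintype.sum_prod_type]
    apply Finset.sum_congr rfl
    intro m _
    rw [Fintype.sum_eq_single (e s)]
    · simp
    · intro i hi
      have hne : s ≠ e.symm i := fun h => hi (by rw [h]; simp)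
      simp [hne]
  · intro m s hpos ω
    have hs : s = e.symm m.2 := by
      by_contra h
      rw [Finset.sum_eq_zero (by intro ω' _; simp [h])] at hpos
      exact lt_irrefl 0 hpos
    subst hs
    simp [Finset.sum_ite_eq' Finset.univ]
end
end

section
/- Let v̂ : Δ(Ω) × S → ℝ and let τ* be a finitely supported joint distribution on Δ(Ω) × S with Bayes-plausible belief marginal (∑_{(μ,s)} τ*(μ, s) μ = μ0) that is optimal with extended commitment, i.e., ∑_{(μ,s)} τ*(μ, s) v̂(μ, s) ≥ ∑_{(μ,s)} τ(μ, s) v̂(μ, s) for every finitely supported joint distribution τ on Δ(Ω) × S with Bayes-plausible belief marginal. Then for every (μ, s) with τ*(μ, s) > 0, the action s is belief-optimal at μ: v̂(μ, s) ≥ v̂(μ, s') for all s' ∈ S. -/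
open scoped BigOperators

noncomputable section

/-- A finitely supported joint distribution on `Δ(Ω) × S` with Bayes-plausible
belief marginal (averaging to the prior `μ0`). -/
def IsBayesPlausibleJoint {Ω S : Type*} [Fintype Ω] [Fintype S]
    (μ0 : Ω → ℝ) (τ : ((Ω → ℝ) × S) → ℝ) : Prop :=
  (∀ x, 0 ≤ τ x) ∧ (Function.support τ).Finite ∧ (∑ᶠ x, τ x) = 1 ∧
  (∀ x, τ x ≠ 0 → x.1 ∈ stdSimplex ℝ Ω) ∧
  (∀ ω, ∑ᶠ x : (Ω → ℝ) × S, τ x * x.1 ω = μ0 ω)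

/-- Shifting mass `g a` from point `a` to point `b` changes a weighted sum by
`g a * (f b - f a)`. -/
lemma shift_finsum {α : Type*} [DecidableEq α] (g f : α → ℝ) (hg : (Function.support g).Finite)
    {a b : α} (hab : a ≠ b) :
    (∑ᶠ x, (Function.update (Function.update g a 0) b (g b + g a)) x * f x)
      = (∑ᶠ x, g x * f x) + g a * (f b - f a) := by
  classical
  set τ := Function.update (Function.update g a 0) b (g b + g a) with hτdef
  have hτa : τ a = 0 := by
    simp [hτdef, Function.update_of_ne hab]
  have hτb : τ b = g b + g a := by simp [hτdef]
  have hτx : ∀ x, x ≠ a → x ≠ b → τ x = g x := by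
    intro x hxa hxb
    simp [hτdef, Function.update_of_ne hxb, Function.update_of_ne hxa]
  set T : Finset α := hg.toFinset ∪ {a, b} with hTdef
  have haT : a ∈ T := by simp [hTdef]
  have hbT : b ∈ T := by simp [hTdef]
  have hgT : ∀ x, g x ≠ 0 → x ∈ T := by
    intro x hx; simp [hTdef, Set.Finite.mem_toFinset, Function.mem_support, hx]
  have h1 : (∑ᶠ x, τ x * f x) = ∑ x ∈ T, τ x * f x := by
    refine finsum_eq_finset_sum_of_support_subset _ ?_
    intro x hx
    have hτx0 : τ x ≠ 0 := by
      intro h0; simp [Function.mem_support, h0] at hx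
    by_cases hxa : x = a
    · exact hxa ▸ haT
    by_cases hxb : x = b
    · exact hxb ▸ hbT
    exact hgT x (by rw [← hτx x hxa hxb]; exact hτx0)
  have h2 : (∑ᶠ x, g x * f x) = ∑ x ∈ T, g x * f x := by
    refine finsum_eq_finset_sum_of_support_subset _ ?_
    intro x hx
    have : g x ≠ 0 := by
      intro h0; simp [Function.mem_support, h0] at hx
    exact hgT x this
  rw [h1, h2]
  have hdiff : (∑ x ∈ T, τ x * f x) - ∑ x ∈ T, g x * f x
      = ∑ x ∈ T, (τ x - g x) * f x := by
    rw [← Finset.sum_sub_distrib]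
    congr 1; ext x; ring
  have hsub : (∑ x ∈ T, (τ x - g x) * f x) = ∑ x ∈ ({a, b} : Finset α), (τ x - g x) * f x := by
    symm
    refine Finset.sum_subset ?_ ?_
    · intro x hx
      simp only [Finset.mem_insert, Finset.mem_singleton] at hx
      rcases hx with rfl | rfl
      · exact haT
      · exact hbT
    · intro x _ hx
      simp only [Finset.mem_insert, Finset.mem_singleton, not_or] at hx
      rw [hτx x hx.1 hx.2]; ring
  have hpair : (∑ x ∈ ({a, b} : Finset α), (τ x - g x) * f x)
      = (τ a - g a) * f a + (τ b - g b) * f b := Finset.sum_pair hab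
  have : (∑ x ∈ T, τ x * f x) - ∑ x ∈ T, g x * f x = g a * (f b - f a) := by
    rw [hdiff, hsub, hpair, hτa, hτb]; ring
  linarith

/-- If `τ*` is optimal with extended commitment, then every
`(μ, s)` in its support uses a belief-optimal action: `v̂(μ, s) ≥ v̂(μ, s')` for
every `s'`. -/
theorem optimal_extended_commitment_uses_belief_optimal_actions
    {Ω S : Type*} [Fintype Ω] [Nonempty Ω] [Fintype S] [Nonempty S]
    (vhat : (Ω → ℝ) → S → ℝ)
    (μ0 : Ω → ℝ) (hμ0 : μ0 ∈ stdSimplex ℝ Ω) (hfull : ∀ ω, 0 < μ0 ω)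
    (τstar : ((Ω → ℝ) × S) → ℝ)
    (hτstar : IsBayesPlausibleJoint μ0 τstar)
    (hopt : ∀ τ : ((Ω → ℝ) × S) → ℝ, IsBayesPlausibleJoint μ0 τ →
      (∑ᶠ x : (Ω → ℝ) × S, τ x * vhat x.1 x.2) ≤
        (∑ᶠ x : (Ω → ℝ) × S, τstar x * vhat x.1 x.2)) :
    ∀ (μ : Ω → ℝ) (s : S), 0 < τstar (μ, s) → ∀ s' : S, vhat μ s' ≤ vhat μ s := by
  classical
  intro μ s hpos s'
  by_contra hlt
  push_neg at hlt
  obtain ⟨hnn, hfin, hsum1, hsimp, hbayes⟩ := hτstar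
  have hss' : s ≠ s' := by rintro rfl; exact lt_irrefl _ hlt
  set a : (Ω → ℝ) × S := (μ, s) with ha
  set b : (Ω → ℝ) × S := (μ, s') with hb
  have hab : a ≠ b := by
    intro h; exact hss' (congrArg Prod.snd h)
  set τ := Function.update (Function.update τstar a 0) b (τstar b + τstar a) with hτdef
  have key := fun f => shift_finsum τstar f hfin hab
  have hτa : τ a = 0 := by simp [hτdef, Function.update_of_ne hab]
  have hτb : τ b = τstar b + τstar a := by simp [hτdef]
  have hτx : ∀ x, x ≠ a → x ≠ b → τ x = τstar x := by
    intro x hxa hxb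
    simp [hτdef, Function.update_of_ne hxb, Function.update_of_ne hxa]
  have hτbp : IsBayesPlausibleJoint μ0 τ := by
    refine ⟨?_, ?_, ?_, ?_, ?_⟩
    · intro x
      by_cases hxb : x = b
      · rw [hxb, hτb]; exact add_nonneg (hnn b) (hnn a)
      by_cases hxa : x = a
      · rw [hxa, hτa]
      · rw [hτx x hxa hxb]; exact hnn x
    · refine Set.Finite.subset (hfin.union (Set.finite_singleton b)) ?_
      intro x hx
      by_cases hxb : x = b
      · exact Or.inr hxb
      by_cases hxa : x = a
      · exfalso; rw [Function.mem_support, hxa, hτa] at hx; exact hx rfl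
      · left; rw [Function.mem_support, hτx x hxa hxb] at hx; exact hx
    · have h := key (fun _ => (1 : ℝ))
      simp only [mul_one, sub_self, mul_zero, add_zero] at h
      exact h.trans hsum1
    · intro x hx
      by_cases hxb : x = b
      · have : τstar a ≠ 0 := ne_of_gt hpos
        have := hsimp a this
        rw [hxb]; exact this
      by_cases hxa : x = a
      · exfalso; rw [hxa, hτa] at hx; exact hx rfl
      · exact hsimp x (by rwa [hτx x hxa hxb] at hx)
    · intro ω
      have h := key (fun x => x.1 ω)
      simp only [ha, hb] at h
      rw [show ((μ, s') : (Ω → ℝ) × S).1 ω - ((μ, s) : (Ω → ℝ) × S).1 ω = 0 by simp,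
        mul_zero, add_zero] at h
      rw [h]
      exact hbayes ω
  have hle := hopt τ hτbp
  have hval := key (fun x => vhat x.1 x.2)
  rw [hval] at hle
  have : vhat b.1 b.2 - vhat a.1 a.2 = vhat μ s' - vhat μ s := by simp [ha, hb]
  rw [this] at hle
  nlinarith [mul_pos hpos (sub_pos.mpr hlt)]
end
end

section
/- Let v̂ : Δ(Ω) × S → ℝ be bounded, and define V^jo(μ) = sup{z : (μ, z) ∈ join((v̂_s)_{s∈S})} and V^co(μ) = sup{z : (μ, z) ∈ convexHull(⋃_{s∈S} v̂_s)} for μ ∈ Δ(Ω). Then V^jo(μ) = V^co(μ) for every μ ∈ Δ(Ω) if and only if V^jo is concave on Δ(Ω). -/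
open scoped BigOperators

noncomputable section

/-- The join envelope of the interim payoff graphs. -/
def Vjo {Ω S : Type*} [Fintype Ω] [Fintype S] (vhat : (Ω → ℝ) → S → ℝ)
    (μ : Ω → ℝ) : ℝ :=
  sSup {z : ℝ | ((μ, z) : (Ω → ℝ) × ℝ) ∈ joinFam (payoffGraph vhat)}

/-- The concave envelope of the interim payoff graphs. -/
def Vco {Ω S : Type*} [Fintype Ω] [Fintype S] (vhat : (Ω → ℝ) → S → ℝ)
    (μ : Ω → ℝ) : ℝ :=
  sSup {z : ℝ |
    ((μ, z) : (Ω → ℝ) × ℝ) ∈ convexHull ℝ (⋃ s : S, payoffGraph vhat s)}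

set_option linter.unusedSectionVars false

section Helpers
variable {Ω S : Type*} [Fintype Ω] [Nonempty Ω] [Fintype S] [Nonempty S]
  (vhat : (Ω → ℝ) → S → ℝ)

lemma mem_join_graph {μ : Ω → ℝ} (hμ : μ ∈ stdSimplex ℝ Ω) (s : S) :
    ((μ, vhat μ s) : (Ω → ℝ) × ℝ) ∈ joinFam (payoffGraph vhat) := by
  classical
  refine ⟨fun i => if i = s then 1 else 0, fun i => (μ, vhat μ i),
    fun i => by dsimp only; split <;> norm_num, by simp, fun i => ⟨μ, hμ, rfl⟩, ?_⟩
  dsimp only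
  rw [show (∑ i : S, (if i = s then (1:ℝ) else 0) • ((μ, vhat μ i) : (Ω → ℝ) × ℝ))
      = ∑ i : S, (if i = s then ((μ, vhat μ i) : (Ω → ℝ) × ℝ) else 0) from
    Finset.sum_congr rfl fun i _ => by split <;> simp]
  simp

lemma join_snd_le {C : ℝ} (hC : ∀ μ ∈ stdSimplex ℝ Ω, ∀ s : S, |vhat μ s| ≤ C)
    {p : (Ω → ℝ) × ℝ} (hp : p ∈ joinFam (payoffGraph vhat)) : p.2 ≤ C := by
  obtain ⟨lam, x, hlam, hsum, hx, rfl⟩ := hp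
  rw [Prod.snd_sum]
  calc ∑ i, (lam i • x i).2 ≤ ∑ i, lam i * C := by
        refine Finset.sum_le_sum fun i _ => ?_
        obtain ⟨ν, hν, hxe⟩ := hx i
        have h2 : (x i).2 = vhat ν i := by rw [hxe]
        have := (abs_le.mp (hC ν hν i)).2
        calc (lam i • x i).2 = lam i * (x i).2 := rfl
          _ ≤ lam i * C := by rw [h2]; exact mul_le_mul_of_nonneg_left this (hlam i)
    _ = C := by rw [← Finset.sum_mul, hsum, one_mul]

lemma hull_snd_le {C : ℝ} (hC : ∀ μ ∈ stdSimplex ℝ Ω, ∀ s : S, |vhat μ s| ≤ C)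
    {p : (Ω → ℝ) × ℝ} (hp : p ∈ convexHull ℝ (⋃ s : S, payoffGraph vhat s)) :
    p.2 ≤ C := by
  have hconv : Convex ℝ {q : (Ω → ℝ) × ℝ | q.2 ≤ C} :=
    convex_halfSpace_le ⟨fun x y => rfl, fun c x => rfl⟩ C
  refine convexHull_min ?_ hconv hp
  rintro q hq
  obtain ⟨s, ν, hν, rfl⟩ := by simpa [payoffGraph, Set.mem_iUnion] using hq
  exact (abs_le.mp (hC ν hν s)).2

lemma join_subset_hull :
    joinFam (payoffGraph vhat) ⊆ convexHull ℝ (⋃ s : S, payoffGraph vhat s) := by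
  rintro p ⟨lam, x, hlam, hsum, hx, rfl⟩
  exact (convex_convexHull ℝ _).sum_mem (fun i _ => hlam i) hsum
    (fun i _ => subset_convexHull ℝ _ (Set.mem_iUnion.mpr ⟨i, hx i⟩))

lemma bddAbove_jo {C : ℝ} (hC : ∀ μ ∈ stdSimplex ℝ Ω, ∀ s : S, |vhat μ s| ≤ C)
    (μ : Ω → ℝ) :
    BddAbove {z : ℝ | ((μ, z) : (Ω → ℝ) × ℝ) ∈ joinFam (payoffGraph vhat)} :=
  ⟨C, fun z hz => join_snd_le vhat hC hz⟩

lemma bddAbove_co {C : ℝ} (hC : ∀ μ ∈ stdSimplex ℝ Ω, ∀ s : S, |vhat μ s| ≤ C)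
    (μ : Ω → ℝ) :
    BddAbove {z : ℝ |
      ((μ, z) : (Ω → ℝ) × ℝ) ∈ convexHull ℝ (⋃ s : S, payoffGraph vhat s)} :=
  ⟨C, fun z hz => hull_snd_le vhat hC hz⟩

lemma nonempty_jo {μ : Ω → ℝ} (hμ : μ ∈ stdSimplex ℝ Ω) :
    {z : ℝ | ((μ, z) : (Ω → ℝ) × ℝ) ∈ joinFam (payoffGraph vhat)}.Nonempty :=
  ⟨vhat μ (Classical.arbitrary S), mem_join_graph vhat hμ _⟩

lemma nonempty_co {μ : Ω → ℝ} (hμ : μ ∈ stdSimplex ℝ Ω) :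
    {z : ℝ | ((μ, z) : (Ω → ℝ) × ℝ) ∈
      convexHull ℝ (⋃ s : S, payoffGraph vhat s)}.Nonempty :=
  ⟨vhat μ (Classical.arbitrary S), join_subset_hull vhat (mem_join_graph vhat hμ _)⟩

lemma Vjo_le_Vco' {C : ℝ} (hC : ∀ μ ∈ stdSimplex ℝ Ω, ∀ s : S, |vhat μ s| ≤ C)
    {μ : Ω → ℝ} (hμ : μ ∈ stdSimplex ℝ Ω) : Vjo vhat μ ≤ Vco vhat μ :=
  csSup_le (nonempty_jo vhat hμ)
    (fun _ hz => le_csSup (bddAbove_co vhat hC μ) (join_subset_hull vhat hz))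

lemma concaveOn_Vco {C : ℝ} (hC : ∀ μ ∈ stdSimplex ℝ Ω, ∀ s : S, |vhat μ s| ≤ C) :
    ConcaveOn ℝ (stdSimplex ℝ Ω) (Vco vhat) := by
  refine ⟨convex_stdSimplex ℝ Ω, fun μ1 h1 μ2 h2 a b ha hb hab => ?_⟩
  refine le_of_forall_pos_le_add fun ε hε => ?_
  obtain ⟨z1, hz1, hz1'⟩ := exists_lt_of_lt_csSup (nonempty_co vhat h1)
    (show Vco vhat μ1 - ε < Vco vhat μ1 by linarith)
  obtain ⟨z2, hz2, hz2'⟩ := exists_lt_of_lt_csSup (nonempty_co vhat h2)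
    (show Vco vhat μ2 - ε < Vco vhat μ2 by linarith)
  have hmem : ((a • μ1 + b • μ2, a * z1 + b * z2) : (Ω → ℝ) × ℝ) ∈
      convexHull ℝ (⋃ s : S, payoffGraph vhat s) := by
    have := (convex_convexHull ℝ (⋃ s : S, payoffGraph vhat s)) hz1 hz2 ha hb hab
    simpa [Prod.smul_mk, Prod.mk_add_mk, smul_eq_mul] using this
  have hle : a * z1 + b * z2 ≤ Vco vhat (a • μ1 + b • μ2) :=
    le_csSup (bddAbove_co vhat hC _) hmem
  have e1 : a * Vco vhat μ1 ≤ a * (z1 + ε) :=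
    mul_le_mul_of_nonneg_left (by linarith) ha
  have e2 : b * Vco vhat μ2 ≤ b * (z2 + ε) :=
    mul_le_mul_of_nonneg_left (by linarith) hb
  have : a * (z1 + ε) + b * (z2 + ε) = a * z1 + b * z2 + ε := by ring_nf; nlinarith [hab]
  simp only [smul_eq_mul]
  linarith

lemma Vco_le_Vjo {C : ℝ} (hC : ∀ μ ∈ stdSimplex ℝ Ω, ∀ s : S, |vhat μ s| ≤ C)
    (hconc : ConcaveOn ℝ (stdSimplex ℝ Ω) (Vjo vhat))
    {μ : Ω → ℝ} (hμ : μ ∈ stdSimplex ℝ Ω) : Vco vhat μ ≤ Vjo vhat μ := by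
  refine csSup_le (nonempty_co vhat hμ) fun z hz => ?_
  rw [convexHull_eq] at hz
  obtain ⟨ι, t, w, q, hw0, hw1, hq, hcm⟩ := hz
  rw [Finset.centerMass_eq_of_sum_1 _ _ hw1] at hcm
  have hfst : μ = ∑ i ∈ t, w i • (q i).1 := by
    have := congrArg Prod.fst hcm.symm
    simpa [Prod.fst_sum] using this
  have hsnd : z = ∑ i ∈ t, w i * (q i).2 := by
    have := congrArg Prod.snd hcm.symm
    simpa [Prod.snd_sum] using this
  have hq1 : ∀ i ∈ t, (q i).1 ∈ stdSimplex ℝ Ω := by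
    intro i hi
    obtain ⟨s, ν, hν, he⟩ := by
      simpa [payoffGraph, Set.mem_iUnion] using hq i hi
    rw [he]; exact hν
  have hq2 : ∀ i ∈ t, (q i).2 ≤ Vjo vhat ((q i).1) := by
    intro i hi
    obtain ⟨s, ν, hν, he⟩ := by
      simpa [payoffGraph, Set.mem_iUnion] using hq i hi
    rw [he]
    exact le_csSup (bddAbove_jo vhat hC _) (mem_join_graph vhat hν s)
  calc z ≤ ∑ i ∈ t, w i • Vjo vhat ((q i).1) := by
        rw [hsnd]
        exact Finset.sum_le_sum fun i hi =>
          mul_le_mul_of_nonneg_left (hq2 i hi) (hw0 i hi)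
    _ ≤ Vjo vhat (∑ i ∈ t, w i • (q i).1) := hconc.le_map_sum hw0 hw1 hq1
    _ = Vjo vhat μ := by rw [← hfst]

end Helpers

/-- For a bounded interim payoff function, the join envelope
coincides with the concave envelope everywhere on `Δ(Ω)` iff the join envelope is
concave on `Δ(Ω)`. -/
theorem join_envelope_eq_concave_envelope_iff_concave
    {Ω S : Type*} [Fintype Ω] [Nonempty Ω] [Fintype S] [Nonempty S]
    (vhat : (Ω → ℝ) → S → ℝ)
    (hbdd : ∃ C : ℝ, ∀ μ ∈ stdSimplex ℝ Ω, ∀ s : S, |vhat μ s| ≤ C) :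
    (∀ μ ∈ stdSimplex ℝ Ω, Vjo vhat μ = Vco vhat μ) ↔
      ConcaveOn ℝ (stdSimplex ℝ Ω) (Vjo vhat) := by
  obtain ⟨C, hC⟩ := hbdd
  constructor
  · intro h
    have hVco := concaveOn_Vco vhat hC
    refine ⟨convex_stdSimplex ℝ Ω, fun x hx y hy a b ha hb hab => ?_⟩
    rw [h x hx, h y hy, h _ ((convex_stdSimplex ℝ Ω) hx hy ha hb hab)]
    exact hVco.2 hx hy ha hb hab
  · intro hconc μ hμ
    exact le_antisymm (Vjo_le_Vco' vhat hC hμ) (Vco_le_Vjo vhat hC hconc hμ)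
end
end

section
/- Let v̂ : Δ(Ω) × S → ℝ be such that μ ↦ v̂(μ, s) is concave on Δ(Ω) for every s ∈ S. Then for every μ ∈ Δ(Ω), V^jo(μ) = V^co(μ), where V^jo(μ) = sup{z : (μ, z) ∈ join((v̂_s)_{s∈S})} and V^co(μ) = sup{z : (μ, z) ∈ convexHull(⋃_{s∈S} v̂_s)}; in particular the join envelope V^jo is concave on Δ(Ω). -/
open scoped BigOperators

noncomputable section

/-!
Concavity makes each hypograph `{(μ, z) : z ≤ v̂(μ, s)}` convex, so a convex combination of
points of the graphs can be regrouped action by action: the points of action `s` merge into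
their barycentre, and by concavity the payoff of `s` there is at least their average payoff.
Thus every point of the convex hull of the graphs lies below a point of their join over the same
belief, and the two envelopes are suprema of sets with the same upper bounds. The concave
envelope is the fibrewise supremum of a convex set, hence concave; it is finite because a concave
function on the simplex is bounded below by its values at the vertices and, since every point is
absorbed by a segment through the barycentre, bounded above as well.
-/

open Set
open scoped Pointwise

section Join

variable {E ι : Type*} [AddCommGroup E] [Module ℝ E] [Fintype ι]

theorem joinFam_subset_convexHull_iUnion (t : ι → Set E) :
    joinFam t ⊆ convexHull ℝ (⋃ i, t i) := by
  rintro _ ⟨lam, x, hlam, hlam1, hx, rfl⟩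
  exact (convex_convexHull ℝ _).sum_mem (fun i _ => hlam i) hlam1
    fun i _ => subset_convexHull ℝ _ (mem_iUnion.2 ⟨i, hx i⟩)

theorem subset_joinFam {t : ι → Set E} (hne : ∀ i, (t i).Nonempty) (i : ι) :
    t i ⊆ joinFam t := by
  classical
  intro p hp
  choose x hx using hne
  refine ⟨Pi.single i 1, Function.update x i p, fun j => ?_, by simp, fun j => ?_, ?_⟩
  · by_cases h : j = i <;> simp [h]
  · by_cases h : j = i
    · subst h; simpa using hp
    · simpa [h] using hx j
  · simp [Pi.single_apply, ite_smul]

theorem convex_joinFam {t : ι → Set E} (ht : ∀ i, Convex ℝ (t i)) : Convex ℝ (joinFam t) := by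
  rintro _ ⟨lam, x, hlam, hlam1, hx, rfl⟩ _ ⟨mu, y, hmu, hmu1, hy, rfl⟩ a b ha hb hab
  have hmix : ∀ i, ∃ z ∈ t i,
      (a * lam i + b * mu i) • z = (a * lam i) • x i + (b * mu i) • y i := fun i =>
    (ht i).exists_mem_add_smul_eq (hx i) (hy i) (mul_nonneg ha (hlam i)) (mul_nonneg hb (hmu i))
  choose z hz hmix using hmix
  refine ⟨fun i => a * lam i + b * mu i, z, fun i => by have := hlam i; have := hmu i; positivity,
    ?_, hz, ?_⟩
  · simp [Finset.sum_add_distrib, ← Finset.mul_sum, hlam1, hmu1, hab]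
  · simp_rw [hmix, Finset.smul_sum, smul_smul, Finset.sum_add_distrib]

theorem convexHull_iUnion_subset_joinFam {t : ι → Set E} (ht : ∀ i, Convex ℝ (t i))
    (hne : ∀ i, (t i).Nonempty) : convexHull ℝ (⋃ i, t i) ⊆ joinFam t :=
  convexHull_min (iUnion_subset (subset_joinFam hne)) (convex_joinFam ht)

end Join

section Concave

variable {E : Type*} [AddCommGroup E] [Module ℝ E]

theorem ConcaveOn.bddAbove_image_of_bddBelow_image {s : Set E} {f : E → ℝ}
    (hf : ConcaveOn ℝ s f) (hb : BddBelow (f '' s)) {p : E} {ε : ℝ} (hε : 0 < ε) (hε1 : ε ≤ 1)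
    (hp : ∀ x ∈ s, ∃ y ∈ s, ε • x + (1 - ε) • y = p) : BddAbove (f '' s) := by
  obtain ⟨m, hm⟩ := hb
  refine ⟨(f p - (1 - ε) * m) / ε, ?_⟩
  rintro _ ⟨x, hx, rfl⟩
  obtain ⟨y, hy, rfl⟩ := hp x hx
  have hjensen := hf.2 hx hy hε.le (sub_nonneg.2 hε1) (add_sub_cancel ε 1)
  have hmy : m ≤ f y := hm ⟨y, hy, rfl⟩
  rw [smul_eq_mul, smul_eq_mul] at hjensen
  rw [le_div_iff₀ hε]
  nlinarith [mul_le_mul_of_nonneg_left hmy (sub_nonneg.2 hε1)]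

theorem Convex.concaveOn_sSup_fiber {C : Set (E × ℝ)} (hC : Convex ℝ C) {s : Set E}
    (hs : Convex ℝ s) (hne : ∀ x ∈ s, ∃ z, (x, z) ∈ C)
    (hbdd : ∀ x ∈ s, BddAbove {z | (x, z) ∈ C}) :
    ConcaveOn ℝ s fun x => sSup {z | (x, z) ∈ C} := by
  refine ⟨hs, fun x hx y hy a b ha hb hab => ?_⟩
  have hsub : a • {z | (x, z) ∈ C} + b • {z | (y, z) ∈ C} ⊆ {z | (a • x + b • y, z) ∈ C} := by
    rintro _ ⟨_, ⟨z, hz, rfl⟩, _, ⟨w, hw, rfl⟩, rfl⟩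
    simpa using hC hz hw ha hb hab
  have hxne : {z | (x, z) ∈ C}.Nonempty := hne x hx
  have hyne : {z | (y, z) ∈ C}.Nonempty := hne y hy
  calc a • sSup {z | (x, z) ∈ C} + b • sSup {z | (y, z) ∈ C}
      = sSup (a • {z | (x, z) ∈ C} + b • {z | (y, z) ∈ C}) := by
        rw [csSup_add hxne.smul_set ((hbdd x hx).smul_of_nonneg ha) hyne.smul_set
          ((hbdd y hy).smul_of_nonneg hb), Real.sSup_smul_of_nonneg ha,
          Real.sSup_smul_of_nonneg hb]
    _ ≤ sSup {z | (a • x + b • y, z) ∈ C} :=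
        csSup_le_csSup (hbdd _ (hs hx hy ha hb hab)) (hxne.smul_set.add hyne.smul_set) hsub

end Concave

section StdSimplex

variable {ι : Type*} [Fintype ι] {f : (ι → ℝ) → ℝ}

theorem ConcaveOn.bddBelow_image_stdSimplex (hf : ConcaveOn ℝ (stdSimplex ℝ ι) f) :
    BddBelow (f '' stdSimplex ℝ ι) := by
  classical
  set vertices := range fun i j : ι => if i = j then (1 : ℝ) else 0
  obtain ⟨m, hm⟩ := ((finite_range _).image f : (f '' vertices).Finite).bddBelow
  refine ⟨m, ?_⟩
  rintro _ ⟨x, hx, rfl⟩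
  rw [← convexHull_basis_eq_stdSimplex] at hx
  obtain ⟨y, hy, hyx⟩ := hf.exists_le_of_mem_convexHull
    (by rintro _ ⟨i, rfl⟩; exact ite_eq_mem_stdSimplex ℝ i) hx
  exact (hm ⟨y, hy, rfl⟩).trans hyx

theorem ConcaveOn.bddAbove_image_stdSimplex (hf : ConcaveOn ℝ (stdSimplex ℝ ι) f) :
    BddAbove (f '' stdSimplex ℝ ι) := by
  rcases isEmpty_or_nonempty ι with hι | hι
  · simp [stdSimplex_of_isEmpty_index]
  set n : ℝ := (Fintype.card ι : ℝ)
  have hn : 1 ≤ n := Nat.one_le_cast.2 Fintype.card_pos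
  -- Every `x` in the simplex is an endpoint of a segment through the barycentre with ratio `1 : n`.
  refine hf.bddAbove_image_of_bddBelow_image hf.bddBelow_image_stdSimplex (p := fun _ => n⁻¹)
    (ε := (n + 1)⁻¹) (by positivity) (inv_le_one_of_one_le₀ (by linarith)) fun x hx =>
      ⟨fun i => (1 + n⁻¹ - x i) / n, ⟨fun i => ?_, ?_⟩, ?_⟩
  · have := (mem_Icc_of_mem_stdSimplex hx i).2
    have : 0 < n⁻¹ := by positivity
    exact div_nonneg (by linarith) (by linarith)
  · rw [← Finset.sum_div, Finset.sum_sub_distrib, hx.2, Finset.sum_const, Finset.card_univ,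
      nsmul_eq_mul]
    field_simp
    ring
  · funext i
    simp only [Pi.add_apply, Pi.smul_apply, smul_eq_mul]
    field_simp
    ring

end StdSimplex

section Payoff

variable {Ω S : Type*} [Fintype Ω] [Fintype S] {vhat : (Ω → ℝ) → S → ℝ}

theorem exists_ge_mem_joinFam_payoffGraph_of_mem_convexHull
    (hconc : ∀ s, ConcaveOn ℝ (stdSimplex ℝ Ω) fun μ => vhat μ s) {μ : Ω → ℝ} {z : ℝ}
    (hz : (μ, z) ∈ convexHull ℝ (⋃ s, payoffGraph vhat s)) :
    ∃ z', z ≤ z' ∧ (μ, z') ∈ joinFam (payoffGraph vhat) := by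
  set hypo : S → Set ((Ω → ℝ) × ℝ) := fun s => {q | q.1 ∈ stdSimplex ℝ Ω ∧ q.2 ≤ vhat q.1 s}
  obtain ⟨_, hmem⟩ := convexHull_nonempty_iff.1 ⟨_, hz⟩
  obtain ⟨s₀, ν, hν, rfl⟩ := mem_iUnion.1 hmem
  have hgraph : ∀ s, payoffGraph vhat s ⊆ hypo s := by
    rintro s _ ⟨ν, hν, rfl⟩
    exact ⟨hν, le_rfl⟩
  -- The hypographs are convex, so their convex hull is already their join.
  obtain ⟨lam, q, hlam, hlam1, hq, hμz⟩ :=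
    convexHull_iUnion_subset_joinFam (fun s => (hconc s).convex_hypograph)
      (fun s => ⟨(ν, vhat ν s), hν, le_rfl⟩) (convexHull_mono (iUnion_mono hgraph) hz)
  rw [Prod.ext_iff] at hμz
  simp only [Prod.fst_sum, Prod.snd_sum, Prod.smul_fst, Prod.smul_snd, smul_eq_mul] at hμz
  refine ⟨∑ s, lam s * vhat (q s).1 s, ?_,
    lam, fun s => ((q s).1, vhat (q s).1 s), hlam, hlam1, fun s => ⟨_, (hq s).1, rfl⟩, ?_⟩
  · rw [hμz.2]
    gcongr with s
    exacts [hlam s, (hq s).2]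
  · simp [Prod.ext_iff, Prod.fst_sum, Prod.snd_sum, hμz.1]

theorem bddAbove_fiber_convexHull_iUnion_payoffGraph
    (hconc : ∀ s, ConcaveOn ℝ (stdSimplex ℝ Ω) fun μ => vhat μ s) (μ : Ω → ℝ) :
    BddAbove {z | (μ, z) ∈ convexHull ℝ (⋃ s, payoffGraph vhat s)} := by
  choose M hM using fun s => (hconc s).bddAbove_image_stdSimplex
  obtain ⟨B, hB⟩ := (finite_range M).bddAbove
  refine ⟨B, fun z hz => ?_⟩
  refine convexHull_min ?_ (convex_halfSpace_le (LinearMap.snd ℝ _ ℝ).isLinear B) hz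
  rintro _ ⟨_, ⟨s, rfl⟩, ν, hν, rfl⟩
  exact (hM s ⟨ν, hν, rfl⟩).trans (hB ⟨s, rfl⟩)

end Payoff

theorem join_envelope_concave_of_concave_interim_payoffs_general
    {Ω S : Type*} [Fintype Ω] [Fintype S] [Nonempty S]
    (vhat : (Ω → ℝ) → S → ℝ)
    (hconc : ∀ s : S, ConcaveOn ℝ (stdSimplex ℝ Ω) (fun μ => vhat μ s)) :
    (∀ μ ∈ stdSimplex ℝ Ω, Vjo vhat μ = Vco vhat μ) ∧
      ConcaveOn ℝ (stdSimplex ℝ Ω) (Vjo vhat) := by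
  have hVjo_eq_Vco : Vjo vhat = Vco vhat := funext fun μ =>
    csSup_eq_csSup_of_forall_exists_le
      (fun z hz => ⟨z, joinFam_subset_convexHull_iUnion _ hz, le_rfl⟩)
      (fun z hz => (exists_ge_mem_joinFam_payoffGraph_of_mem_convexHull hconc hz).imp
        fun _ h => ⟨h.2, h.1⟩)
  refine ⟨fun μ _ => congrFun hVjo_eq_Vco μ, hVjo_eq_Vco ▸ ?_⟩
  exact (convex_convexHull ℝ (⋃ s, payoffGraph vhat s)).concaveOn_sSup_fiber
    (convex_stdSimplex ℝ Ω)
    (fun μ hμ => ⟨_, subset_convexHull ℝ _ (mem_iUnion.2 ⟨Classical.arbitrary S, μ, hμ, rfl⟩)⟩)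
    fun μ _ => bddAbove_fiber_convexHull_iUnion_payoffGraph hconc μ

/-- If each interim payoff function `μ ↦ v̂(μ, s)` is concave on
`Δ(Ω)`, then the join envelope equals the concave envelope on `Δ(Ω)`; in particular
the join envelope is concave on `Δ(Ω)`. -/
theorem join_envelope_concave_of_concave_interim_payoffs
    {Ω S : Type*} [Fintype Ω] [Nonempty Ω] [Fintype S] [Nonempty S]
    (vhat : (Ω → ℝ) → S → ℝ)
    (hconc : ∀ s : S, ConcaveOn ℝ (stdSimplex ℝ Ω) (fun μ => vhat μ s)) :
    (∀ μ ∈ stdSimplex ℝ Ω, Vjo vhat μ = Vco vhat μ) ∧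
      ConcaveOn ℝ (stdSimplex ℝ Ω) (Vjo vhat) :=
  join_envelope_concave_of_concave_interim_payoffs_general vhat hconc
end
end

section
/- Assume that for every (β, s) ∈ Δ(Ω) × S the receiver's best response â(β, s) = argmax_{a∈A} ∑_ω β(ω) u(s, a, ω) is unique, and set v̂(β, s) = ∑_ω β(ω) v(s, â(β, s), ω). Then for every Perfect Bayesian Equilibrium of the finite signaling game at prior μ ∈ Δ(Ω) with sender expected payoff z = ∑_ω μ(ω) ∑_s π(s|ω) v(s, α_s, ω), the point (μ, z) belongs to the convex hull of the union of the pooling payoff graphs, convexHull(⋃_{s∈S} v̂_s^P). -/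
open scoped BigOperators

noncomputable section

/-- A pooling equilibrium exists at `(μb, sb)`: there are beliefs `β` with
`β sb = μb` and receiver-optimal responses `α` such that, for every state in the
support of `μb`, the action `sb` is optimal for the sender. -/
def PoolingAt {Ω S A : Type*} [Fintype Ω] [Fintype S] [Fintype A]
    (v u : S → A → Ω → ℝ) (μb : Ω → ℝ) (sb : S) : Prop :=
  ∃ (β : S → Ω → ℝ) (α : S → A),
    (∀ t, β t ∈ stdSimplex ℝ Ω) ∧ β sb = μb ∧
    (∀ t a, (∑ ω, β t ω * u t a ω) ≤ (∑ ω, β t ω * u t (α t) ω)) ∧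
    (∀ ω, 0 < μb ω → ∀ s', v s' (α s') ω ≤ v sb (α sb) ω)

/-- The pooling payoff graph of action `s`, where the sender's interim payoff is
computed using the receiver's (unique) best response `arg`. -/
def poolingGraph {Ω S A : Type*} [Fintype Ω] [Fintype S] [Fintype A]
    (v u : S → A → Ω → ℝ) (arg : (Ω → ℝ) → S → A) (s : S) :
    Set ((Ω → ℝ) × ℝ) :=
  {q | q.1 ∈ stdSimplex ℝ Ω ∧ PoolingAt v u q.1 s ∧
    q.2 = ∑ ω, q.1 ω * v s (arg q.1 s) ω}

/-!
Let `p s = ∑ ω, μ ω * π ω s` be the probability that signal `s` is sent. Bayes plausibility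
writes the prior as the average `μ = ∑ s, p s • β s` of the posteriors, and the sender's
expected payoff as the same average of the interim payoffs `∑ ω, β s ω * v s (α s) ω`.
For a signal sent with positive probability, every state in the support of `β s` is one in
which the sender sends `s`, so `s` is optimal there: the equilibrium itself, with its beliefs
and responses, is a pooling equilibrium at `(β s, s)`. Uniqueness of the best response gives
`α s = arg (β s) s`, so each interim point lies on the pooling graph of `s`, and `(μ, z)` is
their `p`-weighted average.
-/

open Finset

section SignalingGame

variable {Ω S : Type*} [Fintype Ω]

def signalProb (μ : Ω → ℝ) (π : Ω → S → ℝ) (s : S) : ℝ := ∑ ω, μ ω * π ω s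

section BayesPlausibility

variable {μ : Ω → ℝ} {π : Ω → S → ℝ} {β : S → Ω → ℝ}

lemma signalProb_nonneg (hμ : ∀ ω, 0 ≤ μ ω) (hπ : ∀ ω s, 0 ≤ π ω s) (s : S) :
    0 ≤ signalProb μ π s :=
  sum_nonneg fun ω _ => mul_nonneg (hμ ω) (hπ ω s)

lemma sum_signalProb [Fintype S] (hπ : ∀ ω, ∑ s, π ω s = 1) :
    ∑ s, signalProb μ π s = ∑ ω, μ ω := by
  simp only [signalProb]
  rw [sum_comm]
  simp only [← mul_sum, hπ, mul_one]

lemma signalProb_mul_posterior (hμ : ∀ ω, 0 ≤ μ ω) (hπ : ∀ ω s, 0 ≤ π ω s)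
    (hcons : ∀ s, 0 < signalProb μ π s → ∀ ω, β s ω = μ ω * π ω s / signalProb μ π s)
    (s : S) (ω : Ω) : signalProb μ π s * β s ω = μ ω * π ω s := by
  rcases (signalProb_nonneg hμ hπ s).lt_or_eq with hpos | hzero
  · rw [hcons s hpos ω, mul_div_cancel₀ _ hpos.ne']
  · rw [← hzero, zero_mul]
    exact ((sum_eq_zero_iff_of_nonneg fun ω _ => mul_nonneg (hμ ω) (hπ ω s)).mp
      hzero.symm ω (mem_univ ω)).symm

variable (hμ : ∀ ω, 0 ≤ μ ω) (hπ : ∀ ω s, 0 ≤ π ω s)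
  (hcons : ∀ s, 0 < signalProb μ π s → ∀ ω, β s ω = μ ω * π ω s / signalProb μ π s)
include hμ hπ hcons

lemma sum_signalProb_smul_posterior [Fintype S] (hπ₁ : ∀ ω, ∑ s, π ω s = 1) :
    ∑ s, signalProb μ π s • β s = μ := by
  funext ω
  simp only [Finset.sum_apply, Pi.smul_apply, smul_eq_mul, signalProb_mul_posterior hμ hπ hcons,
    ← mul_sum, hπ₁, mul_one]

lemma sum_signalProb_mul_expectation [Fintype S] (f : S → Ω → ℝ) :
    ∑ s, signalProb μ π s * ∑ ω, β s ω * f s ω = ∑ ω, μ ω * ∑ s, π ω s * f s ω := by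
  simp only [mul_sum, ← mul_assoc, signalProb_mul_posterior hμ hπ hcons]
  rw [sum_comm]

lemma pos_of_posterior_pos {s : S} {ω : Ω} (hs : 0 < signalProb μ π s) (hω : 0 < β s ω) :
    0 < μ ω ∧ 0 < π ω s := by
  have hprod : 0 < μ ω * π ω s := signalProb_mul_posterior hμ hπ hcons s ω ▸ mul_pos hs hω
  exact ⟨(hμ ω).lt_of_ne' (left_ne_zero_of_mul hprod.ne'),
    (hπ ω s).lt_of_ne' (right_ne_zero_of_mul hprod.ne')⟩

end BayesPlausibility

section Equilibrium

variable {A : Type*} {v u : S → A → Ω → ℝ}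

lemma eq_arg_of_isBestResponse {arg : (Ω → ℝ) → S → A}
    (harg : ∀ b ∈ stdSimplex ℝ Ω, ∀ (s : S) (a : A), a ≠ arg b s →
      (∑ ω, b ω * u s a ω) < (∑ ω, b ω * u s (arg b s) ω))
    {b : Ω → ℝ} (hb : b ∈ stdSimplex ℝ Ω) {s : S} {a : A}
    (ha : ∀ a', (∑ ω, b ω * u s a' ω) ≤ (∑ ω, b ω * u s a ω)) : a = arg b s := by
  by_contra hne
  exact (harg b hb s a hne).not_ge (ha (arg b s))

variable {μ : Ω → ℝ} {π : Ω → S → ℝ} {β : S → Ω → ℝ} {α : S → A}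

lemma poolingAt_posterior [Fintype S] [Fintype A]
    (hμ : ∀ ω, 0 ≤ μ ω) (hπ : ∀ ω s, 0 ≤ π ω s)
    (hβ : ∀ s, β s ∈ stdSimplex ℝ Ω)
    (hcons : ∀ s, 0 < signalProb μ π s → ∀ ω, β s ω = μ ω * π ω s / signalProb μ π s)
    (hrec : ∀ s a, (∑ ω, β s ω * u s a ω) ≤ (∑ ω, β s ω * u s (α s) ω))
    (hsend : ∀ ω, 0 < μ ω → ∀ s, 0 < π ω s → ∀ s', v s' (α s') ω ≤ v s (α s) ω)
    {s : S} (hs : 0 < signalProb μ π s) : PoolingAt v u (β s) s := by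
  refine ⟨β, α, hβ, rfl, hrec, fun ω hω => ?_⟩
  obtain ⟨hμω, hπω⟩ := pos_of_posterior_pos hμ hπ hcons hs hω
  exact hsend ω hμω s hπω

end Equilibrium

end SignalingGame

theorem PBE_payoff_mem_convexHull_pooling_graphs_general
    {Ω S A : Type*} [Fintype Ω] [Fintype S]
    [Fintype A]
    (v u : S → A → Ω → ℝ)
    (arg : (Ω → ℝ) → S → A)
    (harg : ∀ β ∈ stdSimplex ℝ Ω, ∀ (s : S) (a : A), a ≠ arg β s →
      (∑ ω, β ω * u s a ω) < (∑ ω, β ω * u s (arg β s) ω))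
    (μ : Ω → ℝ) (hμ : μ ∈ stdSimplex ℝ Ω)
    (π : Ω → S → ℝ) (hπ : ∀ ω, π ω ∈ stdSimplex ℝ S)
    (β : S → Ω → ℝ) (hβ : ∀ s, β s ∈ stdSimplex ℝ Ω)
    (α : S → A)
    (hcons : ∀ s, 0 < (∑ ω, μ ω * π ω s) →
      ∀ ω, β s ω = μ ω * π ω s / ∑ ω', μ ω' * π ω' s)
    (hrec : ∀ s a, (∑ ω, β s ω * u s a ω) ≤ (∑ ω, β s ω * u s (α s) ω))
    (hsend : ∀ ω, 0 < μ ω → ∀ s, 0 < π ω s →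
      ∀ s', v s' (α s') ω ≤ v s (α s) ω)
    (z : ℝ) (hz : z = ∑ ω, μ ω * ∑ s, π ω s * v s (α s) ω) :
    ((μ, z) : (Ω → ℝ) × ℝ) ∈
      convexHull ℝ (⋃ s : S, poolingGraph v u arg s) := by
  have hμ₀ : ∀ ω, 0 ≤ μ ω := hμ.1
  have hπ₀ : ∀ ω s, 0 ≤ π ω s := fun ω => (hπ ω).1
  have hp₀ := signalProb_nonneg hμ₀ hπ₀
  have hpoint : ∑ s, signalProb μ π s • (β s, ∑ ω, β s ω * v s (α s) ω) = (μ, z) := by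
    rw [Prod.ext_iff, Prod.fst_sum, Prod.snd_sum]
    simp only [Prod.smul_fst, Prod.smul_snd, smul_eq_mul]
    exact ⟨sum_signalProb_smul_posterior hμ₀ hπ₀ hcons fun ω => (hπ ω).2,
      hz ▸ sum_signalProb_mul_expectation hμ₀ hπ₀ hcons _⟩
  have hmem : ∀ s, 0 < signalProb μ π s →
      (β s, ∑ ω, β s ω * v s (α s) ω) ∈ poolingGraph v u arg s := fun s hs =>
    ⟨hβ s, poolingAt_posterior hμ₀ hπ₀ hβ hcons hrec hsend hs, by
      rw [← eq_arg_of_isBestResponse harg (hβ s) (hrec s)]⟩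
  rw [← hpoint, ← finsum_eq_sum_of_fintype]
  refine (convex_convexHull ℝ _).finsum_mem hp₀ ?_ fun s hs =>
    subset_convexHull ℝ _ (Set.mem_iUnion_of_mem s (hmem s ((hp₀ s).lt_of_ne' hs)))
  rw [finsum_eq_sum_of_fintype, sum_signalProb fun ω => (hπ ω).2, hμ.2]

/-- Assume the receiver's best response `arg β s` is unique for
every belief and sender action. Then the prior and sender expected payoff of every
Perfect Bayesian Equilibrium lie in the convex hull of the union of the pooling
payoff graphs. -/
theorem PBE_payoff_mem_convexHull_pooling_graphs
    {Ω S A : Type*} [Fintype Ω] [Nonempty Ω] [Fintype S] [Nonempty S]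
    [Fintype A] [Nonempty A]
    (v u : S → A → Ω → ℝ)
    (arg : (Ω → ℝ) → S → A)
    (harg : ∀ β ∈ stdSimplex ℝ Ω, ∀ (s : S) (a : A), a ≠ arg β s →
      (∑ ω, β ω * u s a ω) < (∑ ω, β ω * u s (arg β s) ω))
    (μ : Ω → ℝ) (hμ : μ ∈ stdSimplex ℝ Ω)
    (π : Ω → S → ℝ) (hπ : ∀ ω, π ω ∈ stdSimplex ℝ S)
    (β : S → Ω → ℝ) (hβ : ∀ s, β s ∈ stdSimplex ℝ Ω)
    (α : S → A)
    (hcons : ∀ s, 0 < (∑ ω, μ ω * π ω s) →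
      ∀ ω, β s ω = μ ω * π ω s / ∑ ω', μ ω' * π ω' s)
    (hrec : ∀ s a, (∑ ω, β s ω * u s a ω) ≤ (∑ ω, β s ω * u s (α s) ω))
    (hsend : ∀ ω, 0 < μ ω → ∀ s, 0 < π ω s →
      ∀ s', v s' (α s') ω ≤ v s (α s) ω)
    (z : ℝ) (hz : z = ∑ ω, μ ω * ∑ s, π ω s * v s (α s) ω) :
    ((μ, z) : (Ω → ℝ) × ℝ) ∈
      convexHull ℝ (⋃ s : S, poolingGraph v u arg s) :=
  PBE_payoff_mem_convexHull_pooling_graphs_general v u arg harg μ hμ π hπ β hβ α hcons hrec hsend z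
    hz
end
end

section
/- In the binary-state rating model, assume F is strictly concave on [0,1] and k > ν (equivalently c > b). Then there exist thresholds μ̲, μ̄ with 0 ≤ μ̲ < μ̄ ≤ 1 such that: (a) if μ0 ≤ μ̲, the pooling-on-L belief system (μ_L = μ0, τ_L = 1, τ_H = 0) is optimal; (b) if μ̲ < μ0 < μ̄, the belief system with μ_L = μ̲, μ_H = μ̄, τ_H = (μ0 − μ̲)/(μ̄ − μ̲) and τ_L = 1 − τ_H is optimal; (c) if μ0 ≥ μ̄, the pooling-on-H belief system (μ_H = μ0, τ_H = 1, τ_L = 0) is optimal. -/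
/-!
Any line lying above both interim payoffs `v̂(·, L) = F` and `v̂(·, H)` on `[0, 1]` bounds the value
of every Bayes-plausible system with prior `μ0` by its height at `μ0`, so a system attaining that
height is optimal. A common supporting line of the two payoffs exists by the intermediate value
theorem in its slope; it touches `F` at `μlo` and `v̂(·, H)` at `μhi`. Since
`v̂(μ, H) - F(μ) = b - c (1 - μ)` changes sign once, `μlo ≤ 1 - b / c ≤ μhi`, and the two cannot
coincide because the payoffs' slopes differ by `c`. Between them the split attains the line; to the
left (right) of `[μlo, μhi]` the tangent of the concave `F` (of `v̂(·, H)`) at `μ0` lies above both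
payoffs and pooling attains it.
-/

open scoped BigOperators

noncomputable section

/-- Value of a belief system in the binary-state rating model:
`v̂(μ, H) = F(μ) + b − c(1−μ)` and `v̂(μ, L) = F(μ)`. -/
def ratingValue (F : ℝ → ℝ) (b c μL μH τL τH : ℝ) : ℝ :=
  τL * F μL + τH * (F μH + b - c * (1 - μH))

/-- A Bayes-plausible belief system in the binary-state rating model. -/
def IsBayesPlausibleBS (μ0 μL μH τL τH : ℝ) : Prop :=
  μL ∈ Set.Icc (0 : ℝ) 1 ∧ μH ∈ Set.Icc (0 : ℝ) 1 ∧ 0 ≤ τL ∧ 0 ≤ τH ∧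
  τL + τH = 1 ∧ τL * μL + τH * μH = μ0

/-- An optimal belief system in the binary-state rating model. -/
def IsOptimalBS (F : ℝ → ℝ) (b c μ0 μL μH τL τH : ℝ) : Prop :=
  IsBayesPlausibleBS μ0 μL μH τL τH ∧
  ∀ μL' μH' τL' τH' : ℝ, IsBayesPlausibleBS μ0 μL' μH' τL' τH' →
    ratingValue F b c μL' μH' τL' τH' ≤ ratingValue F b c μL μH τL τH

open Set

section SupSubMul

variable {f : ℝ → ℝ}

/-- Intercept of the lowest line of slope `β` lying above `f` on `[0, 1]`. -/
def supSubMul (f : ℝ → ℝ) (β : ℝ) : ℝ := sSup ((fun y => f y - β * y) '' Icc 0 1)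

lemma isCompact_image_sub_mul (hf : ContinuousOn f (Icc 0 1)) (β : ℝ) :
    IsCompact ((fun y => f y - β * y) '' Icc 0 1) :=
  isCompact_Icc.image_of_continuousOn (hf.sub (continuousOn_const.mul continuousOn_id))

lemma sub_mul_le_supSubMul (hf : ContinuousOn f (Icc 0 1)) (β : ℝ) {y : ℝ}
    (hy : y ∈ Icc (0 : ℝ) 1) : f y - β * y ≤ supSubMul f β :=
  le_csSup (isCompact_image_sub_mul hf β).bddAbove (mem_image_of_mem _ hy)

lemma exists_sub_mul_eq_supSubMul (hf : ContinuousOn f (Icc 0 1)) (β : ℝ) :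
    ∃ x ∈ Icc (0 : ℝ) 1, f x - β * x = supSubMul f β :=
  (isCompact_image_sub_mul hf β).sSup_mem ((nonempty_Icc.2 zero_le_one).image _)

lemma lipschitzWith_supSubMul (hf : ContinuousOn f (Icc 0 1)) :
    LipschitzWith 1 (supSubMul f) := by
  refine LipschitzWith.of_le_add_mul 1 fun β β' => ?_
  obtain ⟨x, hx, hβx⟩ := exists_sub_mul_eq_supSubMul hf β
  have hβ'x := sub_mul_le_supSubMul hf β' hx
  have hshift : (β' - β) * x ≤ dist β β' := by
    rw [Real.dist_eq, abs_sub_comm]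
    nlinarith [le_abs_self (β' - β), abs_nonneg (β' - β), hx.1, hx.2]
  simp only [NNReal.coe_one, one_mul]
  linarith

lemma exists_supSubMul_lt (hf : ContinuousOn f (Icc 0 1)) {r : ℝ} (h0 : f 0 < r) :
    ∃ β, supSubMul f β < r := by
  obtain ⟨δ, hδ, hnear⟩ := Metric.mem_nhdsWithin_iff.mp
    ((hf 0 (left_mem_Icc.2 zero_le_one)).eventually (gt_mem_nhds h0))
  obtain ⟨M, hM⟩ := (isCompact_Icc.image_of_continuousOn hf).bddAbove
  set β := (max M r - r + 1) / δ
  have hβδ : β * δ = max M r - r + 1 := div_mul_cancel₀ _ hδ.ne'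
  have hβ : 0 ≤ β := div_nonneg (by linarith [le_max_right M r]) hδ.le
  refine ⟨β, ?_⟩
  obtain ⟨x, hx, hβx⟩ := exists_sub_mul_eq_supSubMul hf β
  rw [← hβx]
  rcases lt_or_ge x δ with hxδ | hδx
  · have hfx : f x < r := hnear ⟨by simpa [abs_of_nonneg hx.1] using hxδ, hx⟩
    nlinarith [hx.1]
  · have hfx : f x ≤ max M r := (hM (mem_image_of_mem f hx)).trans (le_max_left M r)
    nlinarith [mul_le_mul_of_nonneg_left hδx hβ]

end SupSubMul

structure IsSupportingLine (f : ℝ → ℝ) (a β x : ℝ) : Prop where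
  mem : x ∈ Icc (0 : ℝ) 1
  eq : f x = a + β * x
  le : ∀ y ∈ Icc (0 : ℝ) 1, f y ≤ a + β * y

/-- The intercepts `supSubMul f β` and `supSubMul g β` cross as `β` grows from `0`. -/
theorem exists_common_isSupportingLine {f g : ℝ → ℝ} (hf : ContinuousOn f (Icc 0 1))
    (hg : ContinuousOn g (Icc 0 1)) (h0 : g 0 < f 0) (h1 : ∀ y ∈ Icc (0 : ℝ) 1, f y < g 1) :
    ∃ a β x y, IsSupportingLine f a β x ∧ IsSupportingLine g a β y := by
  obtain ⟨β₁, hβ₁⟩ := exists_supSubMul_lt hg h0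
  have hstart : supSubMul f 0 - supSubMul g 0 ≤ 0 := by
    obtain ⟨x, hx, hfx⟩ := exists_sub_mul_eq_supSubMul hf 0
    have := sub_mul_le_supSubMul hg 0 (right_mem_Icc.2 zero_le_one)
    linarith [h1 x hx]
  have hend : 0 ≤ supSubMul f β₁ - supSubMul g β₁ := by
    have := sub_mul_le_supSubMul hf β₁ (left_mem_Icc.2 zero_le_one)
    linarith
  obtain ⟨β, hβ⟩ := intermediate_value_univ 0 β₁
    ((lipschitzWith_supSubMul hf).continuous.sub (lipschitzWith_supSubMul hg).continuous)
    ⟨hstart, hend⟩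
  obtain ⟨x, hx, hfx⟩ := exists_sub_mul_eq_supSubMul hf β
  obtain ⟨y, hy, hgy⟩ := exists_sub_mul_eq_supSubMul hg β
  have hfg : supSubMul f β = supSubMul g β := sub_eq_zero.mp hβ
  refine ⟨supSubMul f β, β, x, y, ⟨hx, by linarith, fun z hz => ?_⟩,
    ⟨hy, by linarith, fun z hz => ?_⟩⟩
  · linarith [sub_mul_le_supSubMul hf β hz]
  · linarith [sub_mul_le_supSubMul hg β hz]

lemma ConcaveOn.le_add_mul_sub_of_hasDerivAt {S : Set ℝ} {f : ℝ → ℝ} {f' x y : ℝ}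
    (hfc : ConcaveOn ℝ S f) (hx : x ∈ S) (hy : y ∈ S) (hf' : HasDerivAt f f' x) :
    f y ≤ f x + f' * (y - x) := by
  rcases lt_trichotomy x y with hxy | rfl | hyx
  · have := hfc.slope_le_of_hasDerivAt hx hy hxy hf'
    rw [slope_def_field, div_le_iff₀ (sub_pos.2 hxy)] at this
    linarith
  · simp
  · have := hfc.le_slope_of_hasDerivAt hy hx hyx hf'
    rw [slope_def_field, le_div_iff₀ (sub_pos.2 hyx)] at this
    linarith

namespace IsSupportingLine

variable {h k : ℝ → ℝ} {a β x d μ : ℝ}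

lemma eq_of_hasDerivAt (hl : IsSupportingLine h a β x) (hx : x ∈ Ioo (0 : ℝ) 1)
    (hd : HasDerivAt h d x) : d = β := by
  have hmax : IsLocalMax (fun y => h y - (a + β * y)) x := by
    filter_upwards [Icc_mem_nhds hx.1 hx.2] with y hy
    linarith [hl.le y hy, hl.eq]
  have := hmax.hasDerivAt_eq_zero (hd.sub ((hasDerivAt_id x).const_mul β |>.const_add a))
  linarith

/-- `(x - μ) * (y - x) < 0` says that `y` lies on the side of `x` facing `μ`; on the other side
the supporting line itself lies below the tangent at `μ`. -/
lemma le_tangent (hl : IsSupportingLine h a β x) (hhc : ConcaveOn ℝ (Icc 0 1) h)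
    (hμ : μ ∈ Icc (0 : ℝ) 1) (hd : HasDerivAt h d μ) (hμx : μ ≠ x)
    (hkl : ∀ y ∈ Icc (0 : ℝ) 1, k y ≤ a + β * y)
    (hkh : ∀ y ∈ Icc (0 : ℝ) 1, (x - μ) * (y - x) < 0 → k y ≤ h y) :
    ∀ y ∈ Icc (0 : ℝ) 1, k y ≤ (h μ - d * μ) + d * y := by
  intro y hy
  rcases lt_or_ge ((x - μ) * (y - x)) 0 with hnear | hfar
  · linarith [hkh y hy hnear, hhc.le_add_mul_sub_of_hasDerivAt hμ hy hd]
  · have hx := hhc.le_add_mul_sub_of_hasDerivAt hμ hl.mem hd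
    have hslope : 0 ≤ (d - β) * (x - μ) := by nlinarith [hl.le μ hμ, hl.eq]
    have hdist : 0 < (x - μ) ^ 2 := sq_pos_of_ne_zero (sub_ne_zero.2 hμx.symm)
    have hfar' : 0 ≤ (d - β) * (y - x) := by
      refine (mul_nonneg_iff_of_pos_right hdist).mp ?_
      nlinarith [mul_nonneg hslope hfar]
    nlinarith [hkl y hy, hl.eq]

end IsSupportingLine

/-- The analyst's interim payoff `v̂(μ, H)`. -/
def payoffH (F : ℝ → ℝ) (b c μ : ℝ) : ℝ := F μ + b - c * (1 - μ)

section Rating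

variable {F : ℝ → ℝ} {b c a β μlo μhi μ0 d : ℝ}

lemma ratingValue_le_of_le_line (hL : ∀ y ∈ Icc (0 : ℝ) 1, F y ≤ a + β * y)
    (hH : ∀ y ∈ Icc (0 : ℝ) 1, payoffH F b c y ≤ a + β * y) {μL μH τL τH : ℝ}
    (hbp : IsBayesPlausibleBS μ0 μL μH τL τH) :
    ratingValue F b c μL μH τL τH ≤ a + β * μ0 := by
  obtain ⟨hμL, hμH, hτL, hτH, hsum, hmean⟩ := hbp
  have hLτ := mul_le_mul_of_nonneg_left (hL μL hμL) hτL
  have hHτ := mul_le_mul_of_nonneg_left (hH μH hμH) hτH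
  unfold ratingValue
  unfold payoffH at hHτ
  linear_combination hLτ + hHτ + a * hsum + β * hmean

lemma isOptimalBS_of_le_line (hL : ∀ y ∈ Icc (0 : ℝ) 1, F y ≤ a + β * y)
    (hH : ∀ y ∈ Icc (0 : ℝ) 1, payoffH F b c y ≤ a + β * y) {μL μH τL τH : ℝ}
    (hbp : IsBayesPlausibleBS μ0 μL μH τL τH)
    (hval : ratingValue F b c μL μH τL τH = a + β * μ0) :
    IsOptimalBS F b c μ0 μL μH τL τH :=
  ⟨hbp, fun _ _ _ _ hbp' => hval ▸ ratingValue_le_of_le_line hL hH hbp'⟩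

lemma concaveOn_payoffH {s : Set ℝ} (hF : ConcaveOn ℝ s F) : ConcaveOn ℝ s (payoffH F b c) :=
  ⟨hF.1, fun x hx y hy p q hp hq hpq => by
    have := hF.2 hx hy hp hq hpq
    simp only [payoffH, smul_eq_mul] at this ⊢
    linear_combination this + (b - c) * hpq⟩

lemma hasDerivAt_payoffH (hd : HasDerivAt F d μ0) : HasDerivAt (payoffH F b c) (d + c) μ0 := by
  rw [show d + c = d - c * -1 by ring]
  exact (hd.add_const b).sub (((hasDerivAt_id μ0).const_sub 1).const_mul c)

lemma payoffH_le_of_le (hc : 0 < c) (hL : IsSupportingLine F a β μlo)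
    (hH : ∀ y ∈ Icc (0 : ℝ) 1, payoffH F b c y ≤ a + β * y) {y : ℝ} (hy : y ≤ μlo) :
    payoffH F b c y ≤ F y := by
  have := hH μlo hL.mem
  unfold payoffH at this ⊢
  nlinarith [hL.eq]

lemma le_payoffH_of_le (hc : 0 < c) (hH : IsSupportingLine (payoffH F b c) a β μhi)
    (hL : ∀ y ∈ Icc (0 : ℝ) 1, F y ≤ a + β * y) {y : ℝ} (hy : μhi ≤ y) :
    F y ≤ payoffH F b c y := by
  have := hL μhi hH.mem
  have := hH.eq
  unfold payoffH at *
  nlinarith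

/-- The two contact points cannot coincide: at a common interior contact point the line would be
tangent to both `F` and `payoffH F b c`, whose slopes differ by `c`. -/
lemma IsSupportingLine.lt_of_isSupportingLine_payoffH (hb : 0 < b) (hbc : b < c)
    (hdiff : ∀ x ∈ Ioo (0 : ℝ) 1, DifferentiableAt ℝ F x)
    (hL : IsSupportingLine F a β μlo) (hH : IsSupportingLine (payoffH F b c) a β μhi) :
    μlo < μhi := by
  by_contra! hle
  have hc : 0 < c := hb.trans hbc
  have hlo := payoffH_le_of_le hc hL hH.le le_rfl
  have hhi := le_payoffH_of_le hc hH hL.le le_rfl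
  unfold payoffH at hlo hhi
  have heq : μhi = μlo := le_antisymm hle (by nlinarith)
  subst heq
  have hmem : μhi ∈ Ioo (0 : ℝ) 1 := ⟨by nlinarith, by nlinarith⟩
  have hd := (hdiff μhi hmem).hasDerivAt
  linarith [hL.eq_of_hasDerivAt hmem hd, hH.eq_of_hasDerivAt hmem (hasDerivAt_payoffH (b := b) hd)]

lemma exists_isSupportingLine_payoffs (hF : ContinuousOn F (Icc 0 1))
    (hmono : MonotoneOn F (Icc 0 1)) (hb : 0 < b) (hbc : b < c) :
    ∃ a β μlo μhi, IsSupportingLine F a β μlo ∧ IsSupportingLine (payoffH F b c) a β μhi :=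
  exists_common_isSupportingLine hF ((hF.add continuousOn_const).sub (by fun_prop))
    (by simp only [payoffH]; linarith) fun y hy => by
      have := hmono hy (right_mem_Icc.2 zero_le_one) hy.2
      simp only [payoffH]
      linarith

lemma isOptimalBS_split (hL : IsSupportingLine F a β μlo)
    (hH : IsSupportingLine (payoffH F b c) a β μhi) (hlohi : μlo < μhi) (hlo : μlo ≤ μ0)
    (hhi : μ0 ≤ μhi) :
    IsOptimalBS F b c μ0 μlo μhi
      (1 - (μ0 - μlo) / (μhi - μlo)) ((μ0 - μlo) / (μhi - μlo)) := by
  have hgap : 0 < μhi - μlo := sub_pos.2 hlohi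
  have hmean : (1 - (μ0 - μlo) / (μhi - μlo)) * μlo + (μ0 - μlo) / (μhi - μlo) * μhi = μ0 := by
    field_simp
    ring
  refine isOptimalBS_of_le_line hL.le hH.le ⟨hL.mem, hH.mem,
    sub_nonneg.2 ((div_le_one hgap).2 (by linarith)), div_nonneg (by linarith) hgap.le,
    by ring, hmean⟩ ?_
  have hHeq := hH.eq
  unfold payoffH at hHeq
  unfold ratingValue
  rw [hL.eq, hHeq]
  linear_combination β * hmean

lemma isOptimalBS_poolL (hL : IsSupportingLine F a β μlo)
    (hH : IsSupportingLine (payoffH F b c) a β μhi) (hc : 0 < c) (hFc : ConcaveOn ℝ (Icc 0 1) F)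
    (hμ0 : μ0 ∈ Icc (0 : ℝ) 1) (hd : HasDerivAt F d μ0) (hle : μ0 ≤ μlo) :
    IsOptimalBS F b c μ0 μ0 μ0 1 0 := by
  have hbp : IsBayesPlausibleBS μ0 μ0 μ0 1 0 := ⟨hμ0, hμ0, zero_le_one, le_rfl, by ring, by ring⟩
  rcases hle.eq_or_lt with rfl | hlt
  · exact isOptimalBS_of_le_line hL.le hH.le hbp (by simp [ratingValue, hL.eq])
  refine isOptimalBS_of_le_line (fun y hy => ?_)
    (hL.le_tangent hFc hμ0 hd hlt.ne hH.le fun y _ hnear => payoffH_le_of_le hc hL hH.le ?_)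
    hbp (by simp [ratingValue])
  · linarith [hFc.le_add_mul_sub_of_hasDerivAt hμ0 hy hd]
  · linarith [neg_of_mul_neg_right hnear (sub_pos.2 hlt).le]

lemma isOptimalBS_poolH (hL : IsSupportingLine F a β μlo)
    (hH : IsSupportingLine (payoffH F b c) a β μhi) (hc : 0 < c) (hFc : ConcaveOn ℝ (Icc 0 1) F)
    (hμ0 : μ0 ∈ Icc (0 : ℝ) 1) (hd : HasDerivAt F d μ0) (hle : μhi ≤ μ0) :
    IsOptimalBS F b c μ0 μ0 μ0 0 1 := by
  have hbp : IsBayesPlausibleBS μ0 μ0 μ0 0 1 := ⟨hμ0, hμ0, le_rfl, zero_le_one, by ring, by ring⟩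
  have hHeq := hH.eq
  unfold payoffH at hHeq
  rcases hle.eq_or_lt with rfl | hlt
  · exact isOptimalBS_of_le_line hL.le hH.le hbp (by simp [ratingValue, hHeq])
  have hHc := concaveOn_payoffH (b := b) (c := c) hFc
  have hHd := hasDerivAt_payoffH (b := b) (c := c) hd
  refine isOptimalBS_of_le_line
    (hH.le_tangent hHc hμ0 hHd hlt.ne' hL.le fun y _ hnear => le_payoffH_of_le hc hH hL.le ?_)
    (fun y hy => ?_) hbp (by simp [ratingValue, payoffH])
  · linarith [pos_of_mul_neg_right hnear (sub_neg.2 hlt).le]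
  · linarith [hHc.le_add_mul_sub_of_hasDerivAt hμ0 hy hHd]

end Rating

theorem rating_design_concave_general
    (F : ℝ → ℝ)
    (hF : ContDiffOn ℝ 2 F (Set.Icc 0 1))
    (hmono : MonotoneOn F (Set.Icc 0 1))
    (hconc : StrictConcaveOn ℝ (Set.Icc (0 : ℝ) 1) F)
    (ν k : ℝ) (hν : ν ∈ Set.Ioo (0 : ℝ) 1) (hkν : ν < k) :
    ∃ μlo μhi : ℝ, 0 ≤ μlo ∧ μlo < μhi ∧ μhi ≤ 1 ∧
      ∀ μ0 ∈ Set.Ioo (0 : ℝ) 1,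
        (μ0 ≤ μlo →
          IsOptimalBS F (ν / (1 - ν)) (k / (1 - ν)) μ0 μ0 μ0 1 0) ∧
        (μlo < μ0 → μ0 < μhi →
          IsOptimalBS F (ν / (1 - ν)) (k / (1 - ν)) μ0 μlo μhi
            (1 - (μ0 - μlo) / (μhi - μlo)) ((μ0 - μlo) / (μhi - μlo))) ∧
        (μhi ≤ μ0 →
          IsOptimalBS F (ν / (1 - ν)) (k / (1 - ν)) μ0 μ0 μ0 0 1) := by
  have h1ν : 0 < 1 - ν := sub_pos.2 hν.2
  have hb : 0 < ν / (1 - ν) := div_pos hν.1 h1ν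
  have hbc : ν / (1 - ν) < k / (1 - ν) := div_lt_div_of_pos_right hkν h1ν
  have hdiff : ∀ x ∈ Ioo (0 : ℝ) 1, DifferentiableAt ℝ F x := fun x hx =>
    (hF.differentiableOn (by norm_num)).differentiableAt (Icc_mem_nhds hx.1 hx.2)
  obtain ⟨a, β, μlo, μhi, hL, hH⟩ := exists_isSupportingLine_payoffs hF.continuousOn hmono hb hbc
  have hlohi := hL.lt_of_isSupportingLine_payoffH hb hbc hdiff hH
  refine ⟨μlo, μhi, hL.mem.1, hlohi, hH.mem.2, fun μ0 hμ0 => ⟨fun hle => ?_, fun h1 h2 => ?_,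
    fun hle => ?_⟩⟩
  · exact isOptimalBS_poolL hL hH (hb.trans hbc) hconc.concaveOn (Ioo_subset_Icc_self hμ0)
      (hdiff μ0 hμ0).hasDerivAt hle
  · exact isOptimalBS_split hL hH hlohi h1.le h2.le
  · exact isOptimalBS_poolH hL hH (hb.trans hbc) hconc.concaveOn (Ioo_subset_Icc_self hμ0)
      (hdiff μ0 hμ0).hasDerivAt hle

/-- Rating design with strictly concave `F` and `k > ν` (so
`c > b`): there are thresholds `μlo < μhi` such that pooling on `L` is optimal for
low priors, the split `{μ_L = μlo, μ_H = μhi}` is optimal for intermediate priors,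
and pooling on `H` is optimal for high priors. -/
theorem rating_design_concave
    (F : ℝ → ℝ)
    (hF : ContDiffOn ℝ 2 F (Set.Icc 0 1))
    (hmono : MonotoneOn F (Set.Icc 0 1))
    (hF0 : F 0 = 0) (hF1 : F 1 = 1)
    (hconc : StrictConcaveOn ℝ (Set.Icc (0 : ℝ) 1) F)
    (ν k : ℝ) (hν : ν ∈ Set.Ioo (0 : ℝ) 1) (hk : 0 < k) (hkν : ν < k) :
    ∃ μlo μhi : ℝ, 0 ≤ μlo ∧ μlo < μhi ∧ μhi ≤ 1 ∧
      ∀ μ0 ∈ Set.Ioo (0 : ℝ) 1,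
        (μ0 ≤ μlo →
          IsOptimalBS F (ν / (1 - ν)) (k / (1 - ν)) μ0 μ0 μ0 1 0) ∧
        (μlo < μ0 → μ0 < μhi →
          IsOptimalBS F (ν / (1 - ν)) (k / (1 - ν)) μ0 μlo μhi
            (1 - (μ0 - μlo) / (μhi - μlo)) ((μ0 - μlo) / (μhi - μlo))) ∧
        (μhi ≤ μ0 →
          IsOptimalBS F (ν / (1 - ν)) (k / (1 - ν)) μ0 μ0 μ0 0 1) :=
  rating_design_concave_general F hF hmono hconc ν k hν hkν
end
end

section
/- In the binary-state rating model, assume F is strictly convex on [0,1] and k < ν (equivalently c < b). Then there exist thresholds μ̲, μ̄ with 0 ≤ μ̲ ≤ μ̄ ≤ 1 such that: (a) if μ0 ≤ μ̲, the inverted fully separating belief system (μ_L = 1, μ_H = 0, τ_H = 1 − μ0, τ_L = μ0) is optimal; (b) if μ̲ < μ0 < μ̄, the pooling-on-H belief system (μ_H = μ0, τ_H = 1, τ_L = 0) is optimal; (c) if μ0 ≥ μ̄, the truthful fully separating belief system (μ_L = 0, μ_H = 1, τ_H = μ0, τ_L = 1 − μ0) is optimal. -/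
/-!
Write `G μ = F μ + b - c (1 - μ)`, so a belief system is worth `τ_L F(μ_L) + τ_H G(μ_H)` with
`F` and `G` convex. The posteriors straddle `μ0`; bounding `F` and `G` by their chords over
`[0, μ0]` and `[μ0, 1]` (or the other way round) shows that every Bayes-plausible system is worth
at most the best of four extreme ones: pooling on `L` or on `H`, inverted and truthful separation.
Pooling on `L` is dominated by pooling on `H` because `b - c (1 - μ0) > 0`.

Among the remaining three, pooling minus inverted is convex and vanishes at `0`, pooling minus
truthful is convex and vanishes at `1`, and truthful minus inverted is affine, increasing, with
root `(b - c) / (2b - c)`. Hence each comparison flips at most once on `(0, 1)`, in the right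
direction, and the thresholds are read off from these three cut points.
-/

open scoped BigOperators

noncomputable section

open Set

lemma ConvexOn.mul_le_chord {f : ℝ → ℝ} {s : Set ℝ} (hf : ConvexOn ℝ s f) {x y z : ℝ}
    (hx : x ∈ s) (hz : z ∈ s) (hxy : x ≤ y) (hyz : y ≤ z) :
    (z - x) * f y ≤ (z - y) * f x + (y - x) * f z := by
  rcases hxy.eq_or_lt with rfl | hxy
  · simp
  rcases hyz.eq_or_lt with rfl | hyz
  · simp
  exact hf.secant_mono_aux1 hx hz hxy hyz

lemma ConvexOn.add_affine {f : ℝ → ℝ} {s : Set ℝ} (hf : ConvexOn ℝ s f) (m d : ℝ) :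
    ConvexOn ℝ s fun x => f x + (m * x + d) :=
  hf.add (((LinearMap.mul ℝ ℝ m).convexOn hf.1).add_const d)

lemma ConvexOn.exists_nonpos_iff_le {φ : ℝ → ℝ} (hφ : ConvexOn ℝ (Icc 0 1) φ) (h0 : φ 0 ≤ 0) :
    ∃ a ∈ Icc (0 : ℝ) 1, ∀ x ∈ Ioo (0 : ℝ) 1, φ x ≤ 0 ↔ x ≤ a := by
  set S := {x ∈ Icc (0 : ℝ) 1 | φ x ≤ 0}
  have hS0 : (0 : ℝ) ∈ S := ⟨left_mem_Icc.2 zero_le_one, h0⟩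
  have hSbdd : BddAbove S := ⟨1, fun x hx => hx.1.2⟩
  have hbelow : ∀ x ∈ Icc (0 : ℝ) 1, x < sSup S → φ x ≤ 0 := by
    intro x hx hlt
    obtain ⟨y, hyS, hxy⟩ := exists_lt_of_lt_csSup ⟨0, hS0⟩ hlt
    have hseg : x ∈ segment ℝ 0 y := by
      rw [segment_eq_Icc hyS.1.1]
      exact ⟨hx.1, hxy.le⟩
    exact (hφ.le_on_segment hS0.1 hyS.1 hseg).trans (max_le h0 hyS.2)
  refine ⟨sSup S, ⟨le_csSup hSbdd hS0, csSup_le ⟨0, hS0⟩ fun x hx => hx.1.2⟩,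
    fun x hx => ⟨fun h => le_csSup hSbdd ⟨Ioo_subset_Icc_self hx, h⟩, fun h => ?_⟩⟩
  rcases h.lt_or_eq with h | rfl
  · exact hbelow x (Ioo_subset_Icc_self hx) h
  -- a convex function is continuous in the interior, so `φ ≤ 0` passes to the limit from the left
  have hcont : ContinuousAt φ (sSup S) :=
    hφ.continuousOn_interior.continuousAt (by rw [interior_Icc]; exact Ioo_mem_nhds hx.1 hx.2)
  refine le_of_tendsto (hcont.tendsto.mono_left (nhdsWithin_le_nhds (s := Iio (sSup S)))) ?_
  filter_upwards [Ioo_mem_nhdsLT hx.1] with y hy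
  exact hbelow y ⟨hy.1.le, hy.2.le.trans hx.2.le⟩ hy.2

lemma ConvexOn.exists_nonpos_iff_ge {ψ : ℝ → ℝ} (hψ : ConvexOn ℝ (Icc 0 1) ψ) (h1 : ψ 1 ≤ 0) :
    ∃ a ∈ Icc (0 : ℝ) 1, ∀ x ∈ Ioo (0 : ℝ) 1, ψ x ≤ 0 ↔ a ≤ x := by
  have hrefl : ConvexOn ℝ (Icc 0 1) fun x => ψ (1 - x) := by
    refine ⟨convex_Icc 0 1, fun x hx y hy p q hp hq hpq => ?_⟩
    have h := hψ.2 (x := 1 - x) (y := 1 - y) ⟨by linarith [hx.2], by linarith [hx.1]⟩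
      ⟨by linarith [hy.2], by linarith [hy.1]⟩ hp hq hpq
    simp only [smul_eq_mul] at h ⊢
    rwa [show p * (1 - x) + q * (1 - y) = 1 - (p * x + q * y) by linear_combination hpq] at h
  obtain ⟨a, ha, h⟩ := hrefl.exists_nonpos_iff_le (by simpa using h1)
  refine ⟨1 - a, ⟨by linarith [ha.2], by linarith [ha.1]⟩, fun x hx => ?_⟩
  rw [← sub_sub_cancel 1 x, h (1 - x) ⟨by linarith [hx.2], by linarith [hx.1]⟩]
  constructor <;> intro <;> linarith

namespace IsBayesPlausibleBS

variable {μ0 μL μH τL τH : ℝ}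

lemma swap (hp : IsBayesPlausibleBS μ0 μL μH τL τH) : IsBayesPlausibleBS μ0 μH μL τH τL := by
  obtain ⟨hL, hH, hτL, hτH, hτ, hbayes⟩ := hp
  exact ⟨hH, hL, hτH, hτL, by linarith, by linarith⟩

lemma posteriors_straddle (hp : IsBayesPlausibleBS μ0 μL μH τL τH) :
    μL ≤ μ0 ∧ μ0 ≤ μH ∨ μH ≤ μ0 ∧ μ0 ≤ μL := by
  obtain ⟨-, -, hτL, hτH, hτ, hbayes⟩ := hp
  rw [← mem_uIcc, ← segment_eq_uIcc]
  exact ⟨τL, τH, hτL, hτH, hτ, hbayes⟩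

variable {f g : ℝ → ℝ}

lemma value_le_max_of_le_of_le (hf : ConvexOn ℝ (Icc 0 1) f) (hg : ConvexOn ℝ (Icc 0 1) g)
    (hμ0 : μ0 ∈ Ioo 0 1) (hp : IsBayesPlausibleBS μ0 μL μH τL τH) (hL : μL ≤ μ0)
    (hH : μ0 ≤ μH) :
    τL * f μL + τH * g μH ≤ max (max (f μ0) (g μ0)) ((1 - μ0) * f 0 + μ0 * g 1) := by
  obtain ⟨⟨hL0, -⟩, ⟨-, hH1⟩, hτL, hτH, hτ, hbayes⟩ := hp
  obtain ⟨h0, h1⟩ := hμ0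
  have hμ0I : μ0 ∈ Icc (0 : ℝ) 1 := ⟨h0.le, h1.le⟩
  have hchordL : μ0 * f μL ≤ (μ0 - μL) * f 0 + μL * f μ0 := by
    simpa using hf.mul_le_chord (left_mem_Icc.2 zero_le_one) hμ0I hL0 hL
  have hchordH : (1 - μ0) * g μH ≤ (1 - μH) * g μ0 + (μH - μ0) * g 1 :=
    hg.mul_le_chord hμ0I (right_mem_Icc.2 zero_le_one) hH hH1
  set M := max (max (f μ0) (g μ0)) ((1 - μ0) * f 0 + μ0 * g 1)
  have hfM : f μ0 ≤ M := (le_max_left _ _).trans (le_max_left _ _)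
  have hgM : g μ0 ≤ M := (le_max_right _ _).trans (le_max_left _ _)
  have hTM : (1 - μ0) * f 0 + μ0 * g 1 ≤ M := le_max_right _ _
  have hwL : 0 ≤ (1 - μ0) * τL := mul_nonneg (by linarith) hτL
  have hwH : 0 ≤ μ0 * τH := mul_nonneg h0.le hτH
  -- Bayes plausibility gives `τL (μ0 - μL) = τH (μH - μ0)`, so after the chord bounds the
  -- weights of `f 0` and `g 1` pair up into the truthful value
  refine le_of_mul_le_mul_left ?_ (mul_pos h0 (sub_pos.2 h1))
  calc μ0 * (1 - μ0) * (τL * f μL + τH * g μH)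
      = (1 - μ0) * τL * (μ0 * f μL) + μ0 * τH * ((1 - μ0) * g μH) := by ring
    _ ≤ (1 - μ0) * τL * ((μ0 - μL) * f 0 + μL * f μ0)
        + μ0 * τH * ((1 - μH) * g μ0 + (μH - μ0) * g 1) :=
      add_le_add (mul_le_mul_of_nonneg_left hchordL hwL) (mul_le_mul_of_nonneg_left hchordH hwH)
    _ = (1 - μ0) * τL * μL * f μ0 + μ0 * τH * (1 - μH) * g μ0
        + τH * (μH - μ0) * ((1 - μ0) * f 0 + μ0 * g 1) := by
      linear_combination (1 - μ0) * f 0 * (μ0 * hτ - hbayes)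
    _ ≤ (1 - μ0) * τL * μL * M + μ0 * τH * (1 - μH) * M + τH * (μH - μ0) * M := by
      gcongr
    _ = μ0 * (1 - μ0) * M := by linear_combination M * (1 - μ0) * hbayes

lemma value_le_max (hf : ConvexOn ℝ (Icc 0 1) f) (hg : ConvexOn ℝ (Icc 0 1) g)
    (hμ0 : μ0 ∈ Ioo 0 1) (hp : IsBayesPlausibleBS μ0 μL μH τL τH) :
    τL * f μL + τH * g μH ≤ max (max (f μ0) (g μ0))
      (max (μ0 * f 1 + (1 - μ0) * g 0) ((1 - μ0) * f 0 + μ0 * g 1)) := by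
  rcases hp.posteriors_straddle with ⟨hL, hH⟩ | ⟨hH, hL⟩
  · refine (hp.value_le_max_of_le_of_le hf hg hμ0 hL hH).trans ?_
    exact max_le_max le_rfl (le_max_right _ _)
  · have h := hp.swap.value_le_max_of_le_of_le hg hf hμ0 hH hL
    rw [add_comm, max_comm (g μ0)] at h
    refine h.trans (max_le_max le_rfl ?_)
    rw [add_comm]
    exact le_max_left _ _

end IsBayesPlausibleBS

lemma exists_three_regimes {I P T : ℝ → ℝ} {a a' m s : ℝ} (ha : a ∈ Icc (0 : ℝ) 1)
    (ha' : a' ∈ Icc (0 : ℝ) 1) (hm : m ∈ Icc (0 : ℝ) 1) (hs : 0 < s)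
    (hPI : ∀ x ∈ Ioo (0 : ℝ) 1, P x ≤ I x ↔ x ≤ a)
    (hPT : ∀ x ∈ Ioo (0 : ℝ) 1, P x ≤ T x ↔ a' ≤ x)
    (hTI : ∀ x, T x - I x = s * (x - m)) :
    ∃ lo hi : ℝ, 0 ≤ lo ∧ lo ≤ hi ∧ hi ≤ 1 ∧ ∀ x ∈ Ioo (0 : ℝ) 1,
      (x ≤ lo → P x ≤ I x ∧ T x ≤ I x) ∧
      (lo < x → x < hi → I x ≤ P x ∧ T x ≤ P x) ∧
      (hi ≤ x → P x ≤ T x ∧ I x ≤ T x) := by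
  have hTI_le : ∀ x, T x ≤ I x ↔ x ≤ m := fun x => by
    rw [← sub_nonneg, show I x - T x = s * (m - x) by linear_combination -hTI x,
      mul_nonneg_iff_of_pos_left hs, sub_nonneg]
  have hIT_le : ∀ x, I x ≤ T x ↔ m ≤ x := fun x => by
    rw [← sub_nonneg, hTI, mul_nonneg_iff_of_pos_left hs, sub_nonneg]
  refine ⟨min a m, max a' m, le_min ha.1 hm.1, (min_le_right _ _).trans (le_max_right _ _),
    max_le ha'.2 hm.2, fun x hx => ⟨fun h => ?_, fun hlo hhi => ⟨?_, ?_⟩, fun h => ?_⟩⟩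
  · exact ⟨(hPI x hx).2 (h.trans (min_le_left _ _)), (hTI_le x).2 (h.trans (min_le_right _ _))⟩
  · by_contra! hIP
    have hxa := (hPI x hx).1 hIP.le
    have hmx : m < x := by simpa [hxa.not_gt] using hlo
    have hxa' := (hPT x hx).1 (hIP.trans_le ((hIT_le x).2 hmx.le)).le
    exact hhi.not_ge (max_le hxa' hmx.le)
  · by_contra! hTP
    have hxa' := (hPT x hx).1 hTP.le
    have hxm : x < m := by simpa [hxa'.not_gt] using hhi
    have hxa := (hPI x hx).1 (hTP.trans_le ((hTI_le x).2 hxm.le)).le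
    exact hlo.not_ge (le_min hxa hxm.le)
  · exact ⟨(hPT x hx).2 ((le_max_left _ _).trans h), (hIT_le x).2 ((le_max_right _ _).trans h)⟩

section RatingModel

variable {F : ℝ → ℝ} {b c μ0 μL μH τL τH : ℝ}

def invertedValue (F : ℝ → ℝ) (b c μ0 : ℝ) : ℝ := ratingValue F b c 1 0 μ0 (1 - μ0)

def poolingValue (F : ℝ → ℝ) (b c μ0 : ℝ) : ℝ := ratingValue F b c μ0 μ0 0 1

def truthfulValue (F : ℝ → ℝ) (b c μ0 : ℝ) : ℝ := ratingValue F b c 0 1 (1 - μ0) μ0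

lemma ratingValue_le_max (hF : ConvexOn ℝ (Icc 0 1) F) (hb : 0 < b) (hcb : c < b)
    (hμ0 : μ0 ∈ Ioo 0 1) (hp : IsBayesPlausibleBS μ0 μL μH τL τH) :
    ratingValue F b c μL μH τL τH ≤
      max (invertedValue F b c μ0) (max (poolingValue F b c μ0) (truthfulValue F b c μ0)) := by
  have hG : ConvexOn ℝ (Icc 0 1) fun μ => F μ + b - c * (1 - μ) := by
    convert hF.add_affine c (b - c) using 1
    funext μ
    ring
  have hFG : F μ0 ≤ F μ0 + b - c * (1 - μ0) := by nlinarith [hμ0.1, hμ0.2]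
  have hP : poolingValue F b c μ0 = F μ0 + b - c * (1 - μ0) := by
    simp [poolingValue, ratingValue]
  refine (hp.value_le_max hF hG hμ0).trans ?_
  rw [max_eq_right hFG, hP]
  exact max_le (le_max_of_le_right (le_max_left _ _))
    (max_le (le_max_left _ _) (le_max_of_le_right (le_max_right _ _)))

lemma isOptimalBS_of_max_le (hF : ConvexOn ℝ (Icc 0 1) F) (hb : 0 < b) (hcb : c < b)
    (hμ0 : μ0 ∈ Ioo 0 1) (hp : IsBayesPlausibleBS μ0 μL μH τL τH)
    (hmax : max (invertedValue F b c μ0) (max (poolingValue F b c μ0) (truthfulValue F b c μ0)) ≤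
      ratingValue F b c μL μH τL τH) :
    IsOptimalBS F b c μ0 μL μH τL τH :=
  ⟨hp, fun _ _ _ _ hp' => (ratingValue_le_max hF hb hcb hμ0 hp').trans hmax⟩

lemma exists_value_regimes (hF : ConvexOn ℝ (Icc 0 1) F) (hb : 0 < b) (hcb : c < b) :
    ∃ lo hi : ℝ, 0 ≤ lo ∧ lo ≤ hi ∧ hi ≤ 1 ∧ ∀ x ∈ Ioo (0 : ℝ) 1,
      (x ≤ lo → poolingValue F b c x ≤ invertedValue F b c x ∧
        truthfulValue F b c x ≤ invertedValue F b c x) ∧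
      (lo < x → x < hi → invertedValue F b c x ≤ poolingValue F b c x ∧
        truthfulValue F b c x ≤ poolingValue F b c x) ∧
      (hi ≤ x → poolingValue F b c x ≤ truthfulValue F b c x ∧
        invertedValue F b c x ≤ truthfulValue F b c x) := by
  have hPI : ConvexOn ℝ (Icc 0 1) fun x => poolingValue F b c x - invertedValue F b c x := by
    convert hF.add_affine (b + F 0 - F 1) (-F 0) using 1
    funext x
    simp only [poolingValue, invertedValue, ratingValue]
    ring
  have hPT : ConvexOn ℝ (Icc 0 1) fun x => poolingValue F b c x - truthfulValue F b c x := by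
    convert hF.add_affine (c + F 0 - F 1 - b) (b - c - F 0) using 1
    funext x
    simp only [poolingValue, truthfulValue, ratingValue]
    ring
  obtain ⟨a, ha, hPI_iff⟩ :=
    hPI.exists_nonpos_iff_le (by simp [poolingValue, invertedValue, ratingValue])
  obtain ⟨a', ha', hPT_iff⟩ :=
    hPT.exists_nonpos_iff_ge (by simp [poolingValue, truthfulValue, ratingValue])
  have hbc : 0 < b - c := sub_pos.2 hcb
  have h2bc : 0 < 2 * b - c := by linarith
  have hTI : ∀ x, truthfulValue F b c x - invertedValue F b c x =
      (2 * b - c) * (x - (b - c) / (2 * b - c)) := fun x => by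
    rw [mul_sub, mul_div_cancel₀ _ h2bc.ne']
    simp only [truthfulValue, invertedValue, ratingValue]
    ring
  exact exists_three_regimes ha ha'
    ⟨div_nonneg hbc.le h2bc.le, (div_le_one h2bc).2 (by linarith)⟩ h2bc
    (fun x hx => by rw [← sub_nonpos, hPI_iff x hx])
    (fun x hx => by rw [← sub_nonpos, hPT_iff x hx]) hTI

lemma isOptimalBS_inverted (hF : ConvexOn ℝ (Icc 0 1) F) (hb : 0 < b) (hcb : c < b)
    (hμ0 : μ0 ∈ Ioo 0 1) (hP : poolingValue F b c μ0 ≤ invertedValue F b c μ0)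
    (hT : truthfulValue F b c μ0 ≤ invertedValue F b c μ0) :
    IsOptimalBS F b c μ0 1 0 μ0 (1 - μ0) :=
  isOptimalBS_of_max_le hF hb hcb hμ0
    ⟨right_mem_Icc.2 zero_le_one, left_mem_Icc.2 zero_le_one, hμ0.1.le, sub_nonneg.2 hμ0.2.le,
      by ring, by ring⟩
    (max_le le_rfl (max_le hP hT))

lemma isOptimalBS_pooling (hF : ConvexOn ℝ (Icc 0 1) F) (hb : 0 < b) (hcb : c < b)
    (hμ0 : μ0 ∈ Ioo 0 1) (hI : invertedValue F b c μ0 ≤ poolingValue F b c μ0)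
    (hT : truthfulValue F b c μ0 ≤ poolingValue F b c μ0) :
    IsOptimalBS F b c μ0 μ0 μ0 0 1 :=
  isOptimalBS_of_max_le hF hb hcb hμ0
    ⟨Ioo_subset_Icc_self hμ0, Ioo_subset_Icc_self hμ0, le_rfl, zero_le_one, by ring, by ring⟩
    (max_le hI (max_le le_rfl hT))

lemma isOptimalBS_truthful (hF : ConvexOn ℝ (Icc 0 1) F) (hb : 0 < b) (hcb : c < b)
    (hμ0 : μ0 ∈ Ioo 0 1) (hP : poolingValue F b c μ0 ≤ truthfulValue F b c μ0)
    (hI : invertedValue F b c μ0 ≤ truthfulValue F b c μ0) :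
    IsOptimalBS F b c μ0 0 1 (1 - μ0) μ0 :=
  isOptimalBS_of_max_le hF hb hcb hμ0
    ⟨left_mem_Icc.2 zero_le_one, right_mem_Icc.2 zero_le_one, sub_nonneg.2 hμ0.2.le, hμ0.1.le,
      by ring, by ring⟩
    (max_le hI (max_le hP le_rfl))

end RatingModel

theorem rating_design_convex_general
    (F : ℝ → ℝ)
    (hconv : StrictConvexOn ℝ (Set.Icc (0 : ℝ) 1) F)
    (ν k : ℝ) (hν : ν ∈ Set.Ioo (0 : ℝ) 1) (hkν : k < ν) :
    ∃ μlo μhi : ℝ, 0 ≤ μlo ∧ μlo ≤ μhi ∧ μhi ≤ 1 ∧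
      ∀ μ0 ∈ Set.Ioo (0 : ℝ) 1,
        -- inverted fully separating: μ_L = 1, μ_H = 0, τ_H = 1 − μ0, τ_L = μ0
        (μ0 ≤ μlo →
          IsOptimalBS F (ν / (1 - ν)) (k / (1 - ν)) μ0 1 0 μ0 (1 - μ0)) ∧
        -- pooling on H: μ_H = μ0, τ_H = 1, τ_L = 0
        (μlo < μ0 → μ0 < μhi →
          IsOptimalBS F (ν / (1 - ν)) (k / (1 - ν)) μ0 μ0 μ0 0 1) ∧
        -- truthful fully separating: μ_L = 0, μ_H = 1, τ_H = μ0, τ_L = 1 − μ0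
        (μhi ≤ μ0 →
          IsOptimalBS F (ν / (1 - ν)) (k / (1 - ν)) μ0 0 1 (1 - μ0) μ0) := by
  have h1ν : 0 < 1 - ν := sub_pos.2 hν.2
  have hb : 0 < ν / (1 - ν) := div_pos hν.1 h1ν
  have hcb : k / (1 - ν) < ν / (1 - ν) := div_lt_div_of_pos_right hkν h1ν
  have hF := hconv.convexOn
  obtain ⟨lo, hi, hlo, hlohi, hhi, hregimes⟩ := exists_value_regimes hF hb hcb
  refine ⟨lo, hi, hlo, hlohi, hhi, fun μ0 hμ0 => ?_⟩
  obtain ⟨hinv, hpool, htru⟩ := hregimes μ0 hμ0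
  exact ⟨fun h => isOptimalBS_inverted hF hb hcb hμ0 (hinv h).1 (hinv h).2,
    fun h h' => isOptimalBS_pooling hF hb hcb hμ0 (hpool h h').1 (hpool h h').2,
    fun h => isOptimalBS_truthful hF hb hcb hμ0 (htru h).1 (htru h).2⟩

/-- Rating design with strictly convex `F` and `k < ν` (so
`c < b`): there are thresholds `μlo ≤ μhi` such that the inverted fully separating
system is optimal for low priors, pooling on `H` is optimal for intermediate
priors, and the truthful fully separating system is optimal for high priors. -/
theorem rating_design_convex
    (F : ℝ → ℝ)
    (hF : ContDiffOn ℝ 2 F (Set.Icc 0 1))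
    (hmono : MonotoneOn F (Set.Icc 0 1))
    (hF0 : F 0 = 0) (hF1 : F 1 = 1)
    (hconv : StrictConvexOn ℝ (Set.Icc (0 : ℝ) 1) F)
    (ν k : ℝ) (hν : ν ∈ Set.Ioo (0 : ℝ) 1) (hk : 0 < k) (hkν : k < ν) :
    ∃ μlo μhi : ℝ, 0 ≤ μlo ∧ μlo ≤ μhi ∧ μhi ≤ 1 ∧
      ∀ μ0 ∈ Set.Ioo (0 : ℝ) 1,
        -- inverted fully separating: μ_L = 1, μ_H = 0, τ_H = 1 − μ0, τ_L = μ0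
        (μ0 ≤ μlo →
          IsOptimalBS F (ν / (1 - ν)) (k / (1 - ν)) μ0 1 0 μ0 (1 - μ0)) ∧
        -- pooling on H: μ_H = μ0, τ_H = 1, τ_L = 0
        (μlo < μ0 → μ0 < μhi →
          IsOptimalBS F (ν / (1 - ν)) (k / (1 - ν)) μ0 μ0 μ0 0 1) ∧
        -- truthful fully separating: μ_L = 0, μ_H = 1, τ_H = μ0, τ_L = 1 − μ0
        (μhi ≤ μ0 →
          IsOptimalBS F (ν / (1 - ν)) (k / (1 - ν)) μ0 0 1 (1 - μ0) μ0) :=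
  rating_design_convex_general F hconv ν k hν hkν
end
end

section
/- In the binary-state rating model, assume F is strictly concave on [0,1], k ∈ (0,1), and μ0 ∈ (0,1). Then there exists ν_L > 0 such that for every ν ∈ (0, ν_L): every Bayes-plausible belief system with τ_H > 0 has value strictly less than F(μ0), the value of pooling on the low rating. Hence for ν < ν_L the optimal rating policy is uninformative (pooling on L is uniquely optimal). -/
open scoped BigOperators

noncomputable section

/-- With strictly concave `F`, `k ∈ (0,1)` and prior
`μ0 ∈ (0,1)`, if the fraction of naive investors `ν` is small enough then every
Bayes-plausible belief system assigning the high rating with positive probability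
is strictly worse than pooling on the low rating; hence pooling on `L` is
(uniquely) optimal. -/
theorem uninformative_rating_for_few_naive_investors
    (F : ℝ → ℝ)
    (hF : ContDiffOn ℝ 2 F (Set.Icc 0 1))
    (hmono : MonotoneOn F (Set.Icc 0 1))
    (hF0 : F 0 = 0) (hF1 : F 1 = 1)
    (hconc : StrictConcaveOn ℝ (Set.Icc (0 : ℝ) 1) F)
    (k : ℝ) (hk : k ∈ Set.Ioo (0 : ℝ) 1)
    (μ0 : ℝ) (hμ0 : μ0 ∈ Set.Ioo (0 : ℝ) 1) :
    ∃ νL : ℝ, 0 < νL ∧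
      ∀ ν : ℝ, 0 < ν → ν < νL → ν < 1 →
        (∀ μL μH τL τH : ℝ, IsBayesPlausibleBS μ0 μL μH τL τH → 0 < τH →
          ratingValue F (ν / (1 - ν)) (k / (1 - ν)) μL μH τL τH < F μ0) ∧
        IsOptimalBS F (ν / (1 - ν)) (k / (1 - ν)) μ0 μ0 μ0 1 0 := by
  obtain ⟨hμ0a, hμ0b⟩ := hμ0
  obtain ⟨hk0, hk1⟩ := hk
  have hμ0mem : μ0 ∈ Set.Icc (0 : ℝ) 1 := ⟨hμ0a.le, hμ0b.le⟩
  have h0mem : (0 : ℝ) ∈ Set.Icc (0 : ℝ) 1 := ⟨le_refl 0, zero_le_one⟩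
  have h1mem : (1 : ℝ) ∈ Set.Icc (0 : ℝ) 1 := ⟨zero_le_one, le_refl 1⟩
  -- a supporting line of slope `s` at `μ0`, strictly above `F` at `1`
  obtain ⟨s, key1, key2⟩ : ∃ s : ℝ, (∀ μ ∈ Set.Icc (0 : ℝ) 1, F μ ≤ F μ0 + s * (μ - μ0)) ∧
      F 1 < F μ0 + s * (1 - μ0) := by
    set S : Set ℝ := (fun y => (F y - F μ0) / (y - μ0)) '' Set.Ioc μ0 1 with hSdef
    have hne : S.Nonempty := ⟨_, ⟨1, ⟨hμ0b, le_refl 1⟩, rfl⟩⟩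
    have hbdd : BddAbove S := by
      refine ⟨(F μ0 - F 0) / (μ0 - 0), ?_⟩
      rintro _ ⟨y, ⟨hy1, hy2⟩, rfl⟩
      exact hconc.concaveOn.slope_anti_adjacent h0mem ⟨by linarith, hy2⟩ hμ0a hy1
    refine ⟨sSup S, ?_, ?_⟩
    · intro μ hμ
      rcases lt_trichotomy μ μ0 with hlt | heq | hgt
      · have hle : sSup S ≤ (F μ0 - F μ) / (μ0 - μ) := by
          apply csSup_le hne
          rintro _ ⟨y, ⟨hy1, hy2⟩, rfl⟩
          exact hconc.concaveOn.slope_anti_adjacent hμ ⟨by linarith, hy2⟩ hlt hy1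
        rw [le_div_iff₀ (by linarith)] at hle
        nlinarith
      · simp [heq]
      · have hle : (F μ - F μ0) / (μ - μ0) ≤ sSup S :=
          le_csSup hbdd ⟨μ, ⟨hgt, hμ.2⟩, rfl⟩
        rw [div_le_iff₀ (by linarith)] at hle
        linarith
    · have htmem : (μ0 + 1) / 2 ∈ Set.Icc (0 : ℝ) 1 := ⟨by linarith, by linarith⟩
      have hlt : (F 1 - F μ0) / (1 - μ0) <
          (F ((μ0 + 1) / 2) - F μ0) / ((μ0 + 1) / 2 - μ0) :=
        hconc.secant_strict_mono hμ0mem htmem h1mem (by intro hcon; nlinarith)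
          (by intro hcon; nlinarith) (by linarith)
      have hle : (F ((μ0 + 1) / 2) - F μ0) / ((μ0 + 1) / 2 - μ0) ≤ sSup S :=
        le_csSup hbdd ⟨(μ0 + 1) / 2, ⟨by linarith, by linarith⟩, rfl⟩
      have hfin : (F 1 - F μ0) / (1 - μ0) < sSup S := lt_of_lt_of_le hlt hle
      rw [div_lt_iff₀ (by linarith)] at hfin
      linarith
  -- a uniform positive lower bound on the gap plus penalty
  obtain ⟨m, hm, hmge⟩ : ∃ m : ℝ, 0 < m ∧
      ∀ μ ∈ Set.Icc (0 : ℝ) 1, m ≤ F μ0 + s * (μ - μ0) - F μ + k * (1 - μ) := by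
    have hhc : ContinuousOn (fun μ => F μ0 + s * (μ - μ0) - F μ + k * (1 - μ))
        (Set.Icc 0 1) := by
      apply ContinuousOn.add
      · exact (Continuous.continuousOn (by continuity)).sub hF.continuousOn
      · exact Continuous.continuousOn (by continuity)
    obtain ⟨μs, hμsmem, hmin⟩ :=
      isCompact_Icc.exists_isMinOn (Set.nonempty_Icc.mpr zero_le_one) hhc
    refine ⟨_, ?_, fun μ hμ => hmin hμ⟩
    rcases eq_or_lt_of_le hμsmem.2 with h1 | hlt
    · rw [h1]; dsimp only; nlinarith
    · have hg := key1 μs hμsmem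
      have hpos : 0 < k * (1 - μs) := by nlinarith
      dsimp only
      nlinarith
  refine ⟨m / (1 + m), by positivity, ?_⟩
  intro ν hν0 hν1 hν2
  have h1ν : 0 < 1 - ν := by linarith
  have hbm : ν / (1 - ν) < m := by
    rw [div_lt_iff₀ h1ν]
    have := (lt_div_iff₀ (by positivity : (0:ℝ) < 1 + m)).mp hν1
    nlinarith
  have hck : k ≤ k / (1 - ν) := by
    rw [le_div_iff₀ h1ν]; nlinarith
  -- the main strict inequality
  have hmain : ∀ μL μH τL τH : ℝ, IsBayesPlausibleBS μ0 μL μH τL τH → 0 < τH →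
      ratingValue F (ν / (1 - ν)) (k / (1 - ν)) μL μH τL τH < F μ0 := by
    intro μL μH τL τH hbp hτH
    obtain ⟨hμLmem, hμHmem, hτL, hτH0, hsum, hbayes⟩ := hbp
    have hA := key1 μL hμLmem
    have hD : m ≤ F μ0 + s * (μH - μ0) - F μH + k * (1 - μH) := hmge μH hμHmem
    have f2 : k * (1 - μH) ≤ (k / (1 - ν)) * (1 - μH) :=
      mul_le_mul_of_nonneg_right hck (by linarith [hμHmem.2])
    have hE : F μH + ν / (1 - ν) - (k / (1 - ν)) * (1 - μH) ≤
        F μ0 + s * (μH - μ0) + (ν / (1 - ν) - m) := by linarith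
    have p1 : τL * F μL ≤ τL * (F μ0 + s * (μL - μ0)) :=
      mul_le_mul_of_nonneg_left hA hτL
    have p2 : τH * (F μH + ν / (1 - ν) - (k / (1 - ν)) * (1 - μH)) ≤
        τH * (F μ0 + s * (μH - μ0) + (ν / (1 - ν) - m)) :=
      mul_le_mul_of_nonneg_left hE hτH0
    have p3 : 0 < τH * (m - ν / (1 - ν)) := mul_pos hτH (by linarith)
    have hkey : τL * (F μ0 + s * (μL - μ0)) + τH * (F μ0 + s * (μH - μ0)) = F μ0 := by
      linear_combination (F μ0 - s * μ0) * hsum + s * hbayes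
    simp only [ratingValue]
    nlinarith [p1, p2, p3, hkey]
  refine ⟨hmain, ?_, ?_⟩
  · exact ⟨hμ0mem, hμ0mem, zero_le_one, le_refl 0, by norm_num, by ring⟩
  · intro μL' μH' τL' τH' hbp'
    have hpool : ratingValue F (ν / (1 - ν)) (k / (1 - ν)) μ0 μ0 1 0 = F μ0 := by
      simp [ratingValue]
    rw [hpool]
    obtain ⟨hμLmem, hμHmem, hτL, hτH0, hsum, hbayes⟩ := hbp'
    rcases eq_or_lt_of_le hτH0 with heq | hpos
    · have hτL1 : τL' = 1 := by linarith
      have hμL' : μL' = μ0 := by rw [hτL1, ← heq] at hbayes; linarith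
      rw [← heq, hτL1, hμL']
      simp [ratingValue]
    · exact (hmain μL' μH' τL' τH' ⟨hμLmem, hμHmem, hτL, hτH0, hsum, hbayes⟩ hpos).le
end
end

section
/- In the binary-state rating model, assume F is concave on [0,1], k ∈ (0,1), and μ0 ∈ (0,1). Then there exist ν_M, ν_H with 0 < ν_M < ν_H ≤ 1 such that for every ν ∈ (ν_M, ν_H) there is δ > 0 for which the Bayes-plausible belief system with μ_L = μ0 − δ, μ_H = μ0 + δ and τ_L = τ_H = 1/2 has value strictly greater than max{F(μ0), F(μ0) + (ν − k + kμ0)/(1 − ν)}, the best value attainable by an uninformative (pooling) belief system. Hence for ν ∈ (ν_M, ν_H) every optimal rating policy is informative. -/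
/-!
Splitting the prior into `μ0 ± δ` with equal weights loses only
`F μ0 - (F (μ0 + δ) + F (μ0 - δ)) / 2 = o(δ)`, since `F` is differentiable at `μ0`, but the high
rating now carries the posterior `μ0 + δ`, which raises its payoff by `c δ / 2` on average.
At the indifference point `ν* = k (1 - μ0)` both pooling values equal `F μ0`; for `ν` within
`k δ / 2` of `ν*` their gap `|ν - ν*| / (1 - ν)` stays below this first-order gain.
-/

open scoped BigOperators

noncomputable section

/-- A belief system is uninformative at prior `μ0` if every rating issued with
positive probability leaves the posterior at `μ0`. -/
def Uninformative (μ0 μL μH τL τH : ℝ) : Prop :=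
  (τL = 0 ∨ μL = μ0) ∧ (τH = 0 ∨ μH = μ0)

open Filter Topology

theorem HasDerivAt.tendsto_symmetric_second_difference {f : ℝ → ℝ} {f' x : ℝ}
    (hf : HasDerivAt f f' x) :
    Tendsto (fun t ↦ (f (x + t) + f (x - t) - 2 * f x) / t) (𝓝[≠] 0) (𝓝 0) := by
  have hslope := hasDerivAt_iff_tendsto_slope_zero.mp hf
  have hneg : Tendsto (Neg.neg : ℝ → ℝ) (𝓝[≠] 0) (𝓝[≠] 0) := by
    simpa using (tendsto_map : Tendsto (Neg.neg : ℝ → ℝ) (𝓝[≠] 0) (map Neg.neg (𝓝[≠] 0)))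
  have hdiff := hslope.sub (hslope.comp hneg)
  rw [sub_self] at hdiff
  refine hdiff.congr fun t ↦ ?_
  simp only [Function.comp_apply, smul_eq_mul, ← sub_eq_add_neg]
  ring

section RatingModel

variable {F : ℝ → ℝ} {b c m : ℝ}

theorem ratingValue_symmetric_split (δ : ℝ) :
    ratingValue F b c (m - δ) (m + δ) (1 / 2) (1 / 2) =
      F m + (F (m + δ) + F (m - δ) - 2 * F m) / 2 + (b - c * (1 - m) + c * δ) / 2 := by
  unfold ratingValue
  ring

/-- With `g = b - c (1 - m)`, the best pooling value is `F m + (g + |g|) / 2`, so the split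
wins exactly when its second difference plus `c δ` exceeds `|g|`. -/
theorem max_pooling_lt_ratingValue_symmetric_split {δ : ℝ}
    (h : |b - c * (1 - m)| < F (m + δ) + F (m - δ) - 2 * F m + c * δ) :
    max (F m) (F m + (b - c * (1 - m))) <
      ratingValue F b c (m - δ) (m + δ) (1 / 2) (1 / 2) := by
  rw [ratingValue_symmetric_split]
  cases abs_cases (b - c * (1 - m)) <;> apply max_lt <;> linarith

theorem ratingValue_eq_of_uninformative {μL μH τL τH : ℝ}
    (h : Uninformative m μL μH τL τH) :
    ratingValue F b c μL μH τL τH = ratingValue F b c m m τL τH := by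
  obtain ⟨hL | rfl, hH | rfl⟩ := h <;> simp [ratingValue, *]

theorem ratingValue_le_max_pooling_of_uninformative {μL μH τL τH : ℝ}
    (hbp : IsBayesPlausibleBS m μL μH τL τH) (h : Uninformative m μL μH τL τH) :
    ratingValue F b c μL μH τL τH ≤ max (F m) (F m + (b - c * (1 - m))) := by
  obtain ⟨-, -, hτL, hτH, hsum, -⟩ := hbp
  rw [ratingValue_eq_of_uninformative h]
  calc ratingValue F b c m m τL τH = τL * F m + τH * (F m + (b - c * (1 - m))) := by
        unfold ratingValue; ring
    _ ≤ τL * max (F m) (F m + (b - c * (1 - m))) +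
          τH * max (F m) (F m + (b - c * (1 - m))) := by
        gcongr
        exacts [le_max_left _ _, le_max_right _ _]
    _ = max (F m) (F m + (b - c * (1 - m))) := by rw [← add_mul, hsum, one_mul]

theorem IsOptimalBS.not_uninformative {μL μH τL τH μL' μH' τL' τH' : ℝ}
    (hopt : IsOptimalBS F b c m μL μH τL τH) (hbp : IsBayesPlausibleBS m μL' μH' τL' τH')
    (hbeat : max (F m) (F m + (b - c * (1 - m))) < ratingValue F b c μL' μH' τL' τH') :
    ¬ Uninformative m μL μH τL τH := fun hun ↦
  (hbeat.trans_le (hopt.2 _ _ _ _ hbp)).not_ge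
    (ratingValue_le_max_pooling_of_uninformative hopt.1 hun)

end RatingModel

theorem abs_pooling_gain_lt {F : ℝ → ℝ} {k m ν δ : ℝ} (hν0 : 0 ≤ ν) (hν1 : ν < 1)
    (hν : |ν - k * (1 - m)| < k * δ / 2)
    (hloss : -(k * δ / 2) < F (m + δ) + F (m - δ) - 2 * F m) :
    |ν / (1 - ν) - k / (1 - ν) * (1 - m)| <
      F (m + δ) + F (m - δ) - 2 * F m + k / (1 - ν) * δ := by
  have hw : 0 < 1 - ν := by linarith
  set D := F (m + δ) + F (m - δ) - 2 * F m
  have hDw : -(k * δ / 2) < D * (1 - ν) := by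
    rcases le_or_gt 0 D with hD | hD
    · linarith [abs_nonneg (ν - k * (1 - m)), mul_nonneg hD hw.le]
    · nlinarith
  calc |ν / (1 - ν) - k / (1 - ν) * (1 - m)| = |ν - k * (1 - m)| / (1 - ν) := by
        rw [← abs_of_pos hw, ← abs_div, abs_of_pos hw]
        ring_nf
    _ < (D * (1 - ν) + k * δ) / (1 - ν) := by gcongr; linarith
    _ = D + k / (1 - ν) * δ := by field_simp

theorem informative_rating_for_moderate_naive_investors_general
    (F : ℝ → ℝ)
    (hF : ContDiffOn ℝ 2 F (Set.Icc 0 1))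
    (k : ℝ) (hk : k ∈ Set.Ioo (0 : ℝ) 1)
    (μ0 : ℝ) (hμ0 : μ0 ∈ Set.Ioo (0 : ℝ) 1) :
    ∃ νM νH : ℝ, 0 < νM ∧ νM < νH ∧ νH ≤ 1 ∧
      ∀ ν : ℝ, νM < ν → ν < νH →
        (∃ δ : ℝ, 0 < δ ∧ 0 ≤ μ0 - δ ∧ μ0 + δ ≤ 1 ∧
          max (F μ0) (F μ0 + (ν - k + k * μ0) / (1 - ν)) <
            ratingValue F (ν / (1 - ν)) (k / (1 - ν))
              (μ0 - δ) (μ0 + δ) (1 / 2) (1 / 2)) ∧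
        (∀ μL μH τL τH : ℝ,
          IsOptimalBS F (ν / (1 - ν)) (k / (1 - ν)) μ0 μL μH τL τH →
          ¬ Uninformative μ0 μL μH τL τH) := by
  obtain ⟨hk0, hk1⟩ := hk
  obtain ⟨hμ0₀, hμ0₁⟩ := hμ0
  have hderiv : HasDerivAt F (deriv F μ0) μ0 :=
    ((hF.differentiableOn two_ne_zero μ0 ⟨hμ0₀.le, hμ0₁.le⟩).differentiableAt
      (Icc_mem_nhds hμ0₀ hμ0₁)).hasDerivAt
  have hloss : ∀ᶠ δ in 𝓝[>] (0 : ℝ), -(k * δ / 2) < F (μ0 + δ) + F (μ0 - δ) - 2 * F μ0 := by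
    have hlim := hderiv.tendsto_symmetric_second_difference.mono_left
      (nhdsWithin_mono _ fun t (ht : 0 < t) ↦ ht.ne')
    filter_upwards [hlim.eventually (eventually_gt_nhds (by linarith : -(k / 2) < 0)),
      self_mem_nhdsWithin] with δ hδ (hδ0 : 0 < δ)
    rw [lt_div_iff₀ hδ0] at hδ
    linarith
  obtain ⟨δ, hδloss, hδ0, hδ⟩ :=
    (hloss.and (Ioo_mem_nhdsGT (lt_min hμ0₀ (sub_pos.2 hμ0₁)))).exists
  have hδμ0 : δ < μ0 := hδ.trans_le (min_le_left _ _)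
  have hδμ1 : δ < 1 - μ0 := hδ.trans_le (min_le_right _ _)
  refine ⟨k * (1 - μ0) - k * δ / 2, k * (1 - μ0) + k * δ / 2, by nlinarith,
    by nlinarith, by nlinarith, fun ν hνM hνH ↦ ?_⟩
  have hν : |ν - k * (1 - μ0)| < k * δ / 2 := abs_sub_lt_iff.2 ⟨by linarith, by linarith⟩
  have hsplit : IsBayesPlausibleBS μ0 (μ0 - δ) (μ0 + δ) (1 / 2) (1 / 2) :=
    ⟨⟨by linarith, by linarith⟩, ⟨by linarith, by linarith⟩, by norm_num, by norm_num,
      by norm_num, by ring⟩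
  have hbeat := max_pooling_lt_ratingValue_symmetric_split
    (abs_pooling_gain_lt (by nlinarith) (by nlinarith) hν hδloss)
  have hgain : (ν - k + k * μ0) / (1 - ν) = ν / (1 - ν) - k / (1 - ν) * (1 - μ0) := by ring
  refine ⟨⟨δ, hδ0, by linarith, by linarith, by rwa [hgain]⟩, ?_⟩
  exact fun _ _ _ _ hopt ↦ hopt.not_uninformative hsplit hbeat

/-- With concave `F`, `k ∈ (0,1)` and prior `μ0 ∈ (0,1)`, for a
middle range of fractions of naive investors `ν ∈ (νM, νH)` there is a symmetric
informative split `{μ0 − δ, μ0 + δ}` strictly better than the best uninformative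
(pooling) value `max{F(μ0), F(μ0) + (ν − k + kμ0)/(1 − ν)}`; hence every optimal
rating policy is informative. -/
theorem informative_rating_for_moderate_naive_investors
    (F : ℝ → ℝ)
    (hF : ContDiffOn ℝ 2 F (Set.Icc 0 1))
    (hmono : MonotoneOn F (Set.Icc 0 1))
    (hF0 : F 0 = 0) (hF1 : F 1 = 1)
    (hconc : ConcaveOn ℝ (Set.Icc (0 : ℝ) 1) F)
    (k : ℝ) (hk : k ∈ Set.Ioo (0 : ℝ) 1)
    (μ0 : ℝ) (hμ0 : μ0 ∈ Set.Ioo (0 : ℝ) 1) :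
    ∃ νM νH : ℝ, 0 < νM ∧ νM < νH ∧ νH ≤ 1 ∧
      ∀ ν : ℝ, νM < ν → ν < νH →
        (∃ δ : ℝ, 0 < δ ∧ 0 ≤ μ0 - δ ∧ μ0 + δ ≤ 1 ∧
          max (F μ0) (F μ0 + (ν - k + k * μ0) / (1 - ν)) <
            ratingValue F (ν / (1 - ν)) (k / (1 - ν))
              (μ0 - δ) (μ0 + δ) (1 / 2) (1 / 2)) ∧
        (∀ μL μH τL τH : ℝ,
          IsOptimalBS F (ν / (1 - ν)) (k / (1 - ν)) μ0 μL μH τL τH →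
          ¬ Uninformative μ0 μL μH τL τH) :=
  informative_rating_for_moderate_naive_investors_general F hF k hk μ0 hμ0
end
end

section
/- Let F : [0,1] → ℝ be differentiable and strictly concave, and let 0 < μ1 < μ2 < 1. Define c = F'(μ1) − F'(μ2) and b = (F'(μ1)(1 − μ1) + F(μ1)) − (F'(μ2)(1 − μ2) + F(μ2)). Then c > 0, b > 0, c > b, μ1 < 1 − b/c < μ2, and the tangency conditions hold: F'(μ1) = F'(μ2) + c = (F(μ2) + b − c(1 − μ2) − F(μ1))/(μ2 − μ1). In particular, choosing ν = b/(1 + b) ∈ (0,1) and k = c/(1 + b) > 0 yields exactly these values of b = ν/(1−ν) and c = k/(1−ν) with c > b. -/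
/-! The chord slope `s` of `F` over `[μ1, μ2]` lies strictly between `F' μ2` and `F' μ1` by
strict concavity. Writing `c = (F' μ1 - s) + (s - F' μ2)` and
`b = (F' μ1 - s) (1 - μ1) + (s - F' μ2) (1 - μ2)` shows that `b / c` is a weighted average of
`1 - μ1` and `1 - μ2` with positive weights, which gives all the inequalities at once. -/

open Set

theorem weighted_average_mem_Ioo {p q u v : ℝ} (hp : 0 < p) (hq : 0 < q) (huv : u < v) :
    (p * v + q * u) / (p + q) ∈ Ioo u v := by
  have hpq : 0 < p + q := add_pos hp hq
  constructor
  · rw [lt_div_iff₀ hpq]; nlinarith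
  · rw [div_lt_iff₀ hpq]; nlinarith

theorem tangent_at_one_sub_eq (F : ℝ → ℝ) (d₁ d₂ : ℝ) {x y : ℝ} (hxy : x ≠ y) :
    (d₁ * (1 - x) + F x) - (d₂ * (1 - y) + F y)
      = (d₁ - slope F x y) * (1 - x) + (slope F x y - d₂) * (1 - y) := by
  rw [slope_def_field]
  field_simp [sub_ne_zero.2 hxy.symm]
  ring

theorem eq_div_one_sub_div_one_add (a : ℝ) {b : ℝ} (hb : 1 + b ≠ 0) :
    a = a / (1 + b) / (1 - b / (1 + b)) := by
  field_simp
  ring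

/-- For a differentiable, strictly concave `F` on `[0,1]` and
`0 < μ1 < μ2 < 1`, setting `c = F'(μ1) − F'(μ2)` and
`b = (F'(μ1)(1 − μ1) + F(μ1)) − (F'(μ2)(1 − μ2) + F(μ2))` yields `c > 0`, `b > 0`,
`c > b`, the crossing point `1 − b/c` lies in `(μ1, μ2)`, the common-tangency
conditions hold, and the choice `ν = b/(1 + b)`, `k = c/(1 + b)` produces exactly
these values of `b = ν/(1−ν)` and `c = k/(1−ν)` with `c > b`. -/
theorem tangency_parameters_exist
    (F F' : ℝ → ℝ)
    (hderiv : ∀ x ∈ Set.Icc (0 : ℝ) 1, HasDerivWithinAt F (F' x) (Set.Icc 0 1) x)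
    (hconc : StrictConcaveOn ℝ (Set.Icc (0 : ℝ) 1) F)
    (μ1 μ2 : ℝ) (h1 : 0 < μ1) (h12 : μ1 < μ2) (h2 : μ2 < 1)
    (c b : ℝ)
    (hc : c = F' μ1 - F' μ2)
    (hb : b = (F' μ1 * (1 - μ1) + F μ1) - (F' μ2 * (1 - μ2) + F μ2)) :
    0 < c ∧ 0 < b ∧ b < c ∧
    μ1 < 1 - b / c ∧ 1 - b / c < μ2 ∧
    F' μ1 = F' μ2 + c ∧
    F' μ1 = (F μ2 + b - c * (1 - μ2) - F μ1) / (μ2 - μ1) ∧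
    b / (1 + b) ∈ Set.Ioo (0 : ℝ) 1 ∧ 0 < c / (1 + b) ∧
    b = (b / (1 + b)) / (1 - b / (1 + b)) ∧
    c = (c / (1 + b)) / (1 - b / (1 + b)) := by
  have hμ1 : μ1 ∈ Icc (0 : ℝ) 1 := ⟨h1.le, (h12.trans h2).le⟩
  have hμ2 : μ2 ∈ Icc (0 : ℝ) 1 := ⟨(h1.trans h12).le, h2.le⟩
  have hp := sub_pos.2 (hconc.slope_lt_of_hasDerivWithinAt hμ1 hμ2 h12 (hderiv μ1 hμ1))
  have hq := sub_pos.2 (hconc.lt_slope_of_hasDerivWithinAt hμ1 hμ2 h12 (hderiv μ2 hμ2))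
  have hc_pos : 0 < c := by rw [hc]; linarith
  have hbc : b / c ∈ Ioo (1 - μ2) (1 - μ1) := by
    have hb' := hb.trans (tangent_at_one_sub_eq F _ _ h12.ne)
    have hc' : c = (F' μ1 - slope F μ1 μ2) + (slope F μ1 μ2 - F' μ2) := by rw [hc]; ring
    rw [hb', hc']
    exact weighted_average_mem_Ioo hp hq (by linarith)
  have hb_pos : 0 < b := by
    have := (lt_div_iff₀ hc_pos).1 hbc.1
    nlinarith
  have hb_lt_c : b < c := by
    have := (div_lt_iff₀ hc_pos).1 hbc.2
    nlinarith
  have hb1 : (0 : ℝ) < 1 + b := by linarith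
  refine ⟨hc_pos, hb_pos, hb_lt_c, by linarith [hbc.2], by linarith [hbc.1], by rw [hc]; ring,
    ?_, ⟨by positivity, (div_lt_one hb1).2 (by linarith)⟩, by positivity,
    eq_div_one_sub_div_one_add b hb1.ne', eq_div_one_sub_div_one_add c hb1.ne'⟩
  rw [hb, hc, eq_div_iff (sub_ne_zero.2 h12.ne')]
  ring
end

section
/- Let F : [0,1] → ℝ be differentiable and strictly concave, let 0 < μ1 < μ2 < 1, and define c = F'(μ1) − F'(μ2) and b = (F'(μ1)(1 − μ1) + F(μ1)) − (F'(μ2)(1 − μ2) + F(μ2)). Let L(μ) = F(μ1) + F'(μ1)(μ − μ1). Then L(μ) ≥ F(μ) for all μ ∈ [0,1] with equality at μ = μ1, and L(μ) ≥ F(μ) + b − c(1 − μ) for all μ ∈ [0,1] with equality at μ = μ2. Consequently, in the binary-state rating model with these values of b and c, for every prior μ0 ∈ [μ1, μ2]: every Bayes-plausible belief system has value at most L(μ0), and the belief system with μ_L = μ1, μ_H = μ2, τ_H = (μ0 − μ1)/(μ2 − μ1), τ_L = 1 − τ_H attains value L(μ0) and is therefore optimal. -/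
open scoped BigOperators

noncomputable section

/-- Tangent line of a concave function dominates it. -/
lemma tangent_dominates {F : ℝ → ℝ} (hconc : ConcaveOn ℝ (Set.Icc (0:ℝ) 1) F)
    {x₀ f' : ℝ} (hx₀ : x₀ ∈ Set.Icc (0:ℝ) 1)
    (hd : HasDerivWithinAt F f' (Set.Icc 0 1) x₀) :
    ∀ μ ∈ Set.Icc (0:ℝ) 1, F μ ≤ F x₀ + f' * (μ - x₀) := by
  intro μ hμ
  rcases lt_trichotomy μ x₀ with h | h | h
  · have := hconc.le_slope_of_hasDerivWithinAt hμ hx₀ h hd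
    rw [slope_def_field] at this
    have h' : 0 < x₀ - μ := by linarith
    rw [le_div_iff₀ h'] at this
    nlinarith
  · simp [h]
  · have := hconc.slope_le_of_hasDerivWithinAt hx₀ hμ h hd
    rw [slope_def_field, div_le_iff₀ (by linarith : (0:ℝ) < μ - x₀)] at this
    nlinarith

/-- With `b`, `c` chosen by the tangency construction for a
differentiable strictly concave `F`, the tangent line
`L(μ) = F(μ1) + F'(μ1)(μ − μ1)` dominates both interim payoff functions on `[0,1]`
(with equality at `μ1` and `μ2` respectively); hence for every prior
`μ0 ∈ [μ1, μ2]` every Bayes-plausible belief system has value at most `L(μ0)`, and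
the split `{μ_L = μ1, μ_H = μ2}` attains `L(μ0)` and is optimal. -/
theorem tangent_line_dominates_and_split_optimal
    (F F' : ℝ → ℝ)
    (hderiv : ∀ x ∈ Set.Icc (0 : ℝ) 1, HasDerivWithinAt F (F' x) (Set.Icc 0 1) x)
    (hconc : StrictConcaveOn ℝ (Set.Icc (0 : ℝ) 1) F)
    (μ1 μ2 : ℝ) (h1 : 0 < μ1) (h12 : μ1 < μ2) (h2 : μ2 < 1)
    (c b : ℝ)
    (hc : c = F' μ1 - F' μ2)
    (hb : b = (F' μ1 * (1 - μ1) + F μ1) - (F' μ2 * (1 - μ2) + F μ2)) :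
    (∀ μ ∈ Set.Icc (0 : ℝ) 1, F μ ≤ F μ1 + F' μ1 * (μ - μ1)) ∧
    F μ1 + F' μ1 * (μ1 - μ1) = F μ1 ∧
    (∀ μ ∈ Set.Icc (0 : ℝ) 1,
      F μ + b - c * (1 - μ) ≤ F μ1 + F' μ1 * (μ - μ1)) ∧
    F μ2 + b - c * (1 - μ2) = F μ1 + F' μ1 * (μ2 - μ1) ∧
    ∀ μ0 : ℝ, μ1 ≤ μ0 → μ0 ≤ μ2 →
      (∀ μL μH τL τH : ℝ, IsBayesPlausibleBS μ0 μL μH τL τH →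
        ratingValue F b c μL μH τL τH ≤ F μ1 + F' μ1 * (μ0 - μ1)) ∧
      ratingValue F b c μ1 μ2 (1 - (μ0 - μ1) / (μ2 - μ1)) ((μ0 - μ1) / (μ2 - μ1)) =
        F μ1 + F' μ1 * (μ0 - μ1) ∧
      IsOptimalBS F b c μ0 μ1 μ2
        (1 - (μ0 - μ1) / (μ2 - μ1)) ((μ0 - μ1) / (μ2 - μ1)) := by
  have hμ1 : μ1 ∈ Set.Icc (0:ℝ) 1 := ⟨h1.le, by linarith⟩
  have hμ2 : μ2 ∈ Set.Icc (0:ℝ) 1 := ⟨by linarith, h2.le⟩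
  have hT1 := tangent_dominates hconc.concaveOn hμ1 (hderiv μ1 hμ1)
  have hT2 := tangent_dominates hconc.concaveOn hμ2 (hderiv μ2 hμ2)
  have hH : ∀ μ ∈ Set.Icc (0:ℝ) 1,
      F μ + b - c * (1 - μ) ≤ F μ1 + F' μ1 * (μ - μ1) := by
    intro μ hμ
    have := hT2 μ hμ
    subst hb hc; nlinarith
  have heq2 : F μ2 + b - c * (1 - μ2) = F μ1 + F' μ1 * (μ2 - μ1) := by
    subst hb hc; ring
  refine ⟨hT1, by ring, hH, heq2, ?_⟩
  intro μ0 hμ0l hμ0r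
  have hd : (0:ℝ) < μ2 - μ1 := by linarith
  set t : ℝ := (μ0 - μ1) / (μ2 - μ1) with ht
  have ht0 : 0 ≤ t := div_nonneg (by linarith) hd.le
  have ht1 : t ≤ 1 := by
    rw [ht, div_le_one hd]; linarith
  have htmean : (1 - t) * μ1 + t * μ2 = μ0 := by
    have : t * (μ2 - μ1) = μ0 - μ1 := by
      rw [ht]; field_simp
    nlinarith
  have hbound : ∀ μL μH τL τH : ℝ, IsBayesPlausibleBS μ0 μL μH τL τH →
      ratingValue F b c μL μH τL τH ≤ F μ1 + F' μ1 * (μ0 - μ1) := by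
    intro μL μH τL τH ⟨hL, hHm, hτL, hτH, hsum, hmean⟩
    have e1 : τL * F μL ≤ τL * (F μ1 + F' μ1 * (μL - μ1)) :=
      mul_le_mul_of_nonneg_left (hT1 μL hL) hτL
    have e2 : τH * (F μH + b - c * (1 - μH)) ≤ τH * (F μ1 + F' μ1 * (μH - μ1)) :=
      mul_le_mul_of_nonneg_left (hH μH hHm) hτH
    have key : τL * (F μ1 + F' μ1 * (μL - μ1)) + τH * (F μ1 + F' μ1 * (μH - μ1))
        = F μ1 + F' μ1 * (μ0 - μ1) := by
      linear_combination (F μ1 - F' μ1 * μ1) * hsum + F' μ1 * hmean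
    simp only [ratingValue]
    linarith
  have hattain : ratingValue F b c μ1 μ2 (1 - t) t = F μ1 + F' μ1 * (μ0 - μ1) := by
    simp only [ratingValue]
    rw [heq2]
    have h' : t * (μ2 - μ1) = μ0 - μ1 := by
      rw [ht]; field_simp
    linear_combination F' μ1 * h'
  refine ⟨hbound, hattain, ⟨⟨hμ1, hμ2, by linarith, ht0, by ring, ?_⟩, ?_⟩⟩
  · linarith [htmean]
  · intro μL' μH' τL' τH' hbp
    rw [hattain]
    exact hbound μL' μH' τL' τH' hbp
end
end
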